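/- arXiv:1603.08878 — 7 statements merged into one kernel-verified Lean document; each statement's English description precedes it below -/
import Mathlib

section
/- Let q be a prime power, n a positive integer with n | q−1, and α ∈ F_q a primitive n-th root of unity. Let r, k be positive integers with r | k, (r+1) | n, μ = k/r, and μ(r+1) ≤ n. Let C ⊆ F_q^n be the linear span of the vectors g_j = (1, α^j, α^{2j}, …, α^{(n−1)j}) for j ∈ {0, 1, …, μ(r+1)−2} \ {ℓ(r+1)−1 : ℓ = 1, …, μ−1}. Then: (i) C is a cyclic code whose complete defining set of zeros is the disjoint union D ∪ L̄, where D = {α^i : 1 ≤ i ≤ n−μ(r+1)+1} and L̄ = {α^{n−(μ−l)(r+1)+1} : l = 1, 2, …, μ−1}; (ii) dim C = k; (iii) C has locality r and minimum distance d(C) = n − μ(r+1) + 2, so C is an optimal (n,k,r) LRC code, i.e., d(C) = n − k − ⌈k/r⌉ + 2. -/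
open scoped BigOperators

namespace LRC

/-- Hamming weight of a vector. -/
noncomputable def hwt {n : ℕ} {F : Type*} [Zero F] (c : Fin n → F) : ℕ :=
  Nat.card {i : Fin n // c i ≠ 0}

/-- A linear code is cyclic if it is closed under the cyclic shift of coordinates. -/
def IsCyclicCode {n : ℕ} [NeZero n] {F : Type*} [Field F] (C : Submodule F (Fin n → F)) : Prop :=
  ∀ c ∈ C, (fun i : Fin n => c (i - 1)) ∈ C

/-- `A` is a recovery set for coordinate `i` of the code `C`. -/
def IsRecoverySet {n : ℕ} {F : Type*} [Field F] (C : Submodule F (Fin n → F)) (i : Fin n)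
    (A : Finset (Fin n)) : Prop :=
  i ∉ A ∧ ∃ φ : ((j : A) → F) → F, ∀ c ∈ C, c i = φ (fun j => c j)

/-- The code `C` has locality `r`. -/
def HasLocality {n : ℕ} {F : Type*} [Field F] (C : Submodule F (Fin n → F)) (r : ℕ) : Prop :=
  ∀ i : Fin n, ∃ A : Finset (Fin n), A.card ≤ r ∧ IsRecoverySet C i A

/-- Complete defining set of zeros of a cyclic code (locator field = symbol field). -/
def definingSet {n : ℕ} {F : Type*} [Field F] (C : Submodule F (Fin n → F)) : Set F :=
  {β | β ^ n = 1 ∧ ∀ c ∈ C, ∑ j : Fin n, c j * β ^ (j : ℕ) = 0}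

/-- Complete defining set of zeros of a cyclic code in an extension (locator) field `K`. -/
def definingSetExt (n : ℕ) {F K : Type*} [Field F] [Field K] [Algebra F K]
    (C : Submodule F (Fin n → F)) : Set K :=
  {β | β ^ n = 1 ∧ ∀ c ∈ C, ∑ j : Fin n, algebraMap F K (c j) * β ^ (j : ℕ) = 0}

/-- The cyclic code with a given set of zeros. -/
def codeOfZeros (n : ℕ) {F : Type*} [Field F] (Z : Set F) : Submodule F (Fin n → F) where
  carrier := {c | ∀ β ∈ Z, ∑ j : Fin n, c j * β ^ (j : ℕ) = 0}
  add_mem' := by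
    intro a b ha hb β hβ
    have h1 := ha β hβ
    have h2 := hb β hβ
    calc ∑ j : Fin n, (a + b) j * β ^ (j : ℕ)
        = (∑ j : Fin n, a j * β ^ (j : ℕ)) + ∑ j : Fin n, b j * β ^ (j : ℕ) := by
          rw [← Finset.sum_add_distrib]
          exact Finset.sum_congr rfl (by intro j _; simp [add_mul])
      _ = 0 := by rw [h1, h2, add_zero]
  zero_mem' := by intro β hβ; simp
  smul_mem' := by
    intro t a ha β hβ
    have h1 := ha β hβ
    calc ∑ j : Fin n, (t • a) j * β ^ (j : ℕ)
        = t * ∑ j : Fin n, a j * β ^ (j : ℕ) := by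
          rw [Finset.mul_sum]
          exact Finset.sum_congr rfl (by intro j _; simp [mul_assoc])
      _ = 0 := by rw [h1, mul_zero]

/-- Minimum distance: least Hamming weight of a nonzero codeword. -/
noncomputable def minDist {n : ℕ} {F : Type*} [Field F] (C : Submodule F (Fin n → F)) : ℕ :=
  sInf {w | ∃ c ∈ C, c ≠ 0 ∧ hwt c = w}

/-- The dual code under the standard bilinear form. -/
def dualCode {n : ℕ} {F : Type*} [Field F] (C : Submodule F (Fin n → F)) :
    Submodule F (Fin n → F) where
  carrier := {y | ∀ c ∈ C, ∑ i : Fin n, c i * y i = 0}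
  add_mem' := by
    intro a b ha hb c hc
    have h1 := ha c hc
    have h2 := hb c hc
    calc ∑ i : Fin n, c i * (a + b) i
        = (∑ i : Fin n, c i * a i) + ∑ i : Fin n, c i * b i := by
          rw [← Finset.sum_add_distrib]
          exact Finset.sum_congr rfl (by intro j _; simp [mul_add])
      _ = 0 := by rw [h1, h2, add_zero]
  zero_mem' := by intro c hc; simp
  smul_mem' := by
    intro t a ha c hc
    have h1 := ha c hc
    calc ∑ i : Fin n, c i * (t • a) i
        = t * ∑ i : Fin n, c i * a i := by
          rw [Finset.mul_sum]
          exact Finset.sum_congr rfl (by intro j _; simp [mul_assoc]; ring)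
      _ = 0 := by rw [h1, mul_zero]

/-!
The generators are the evaluation vectors `g_j = (p(α ^ i))_i` of the monomials `p = X ^ j`, for
`j` in `E = {j ≤ μ (r + 1) - 2 : r + 1 ∤ j + 1}`, so every codeword is `(p(α ^ i))_i` for some `p`
supported on `E`. As `E ⊆ [0, n)` and the `α ^ i` are `n` distinct points, this evaluation is
injective, whence `dim C = |E| = r μ = k`; a nonzero codeword has at most `deg p ≤ μ (r + 1) - 2`
zeros, and an explicit `p` supported on `E` with that many roots among the `α ^ i` shows that this
bound is attained. The zeros of `C` come from the character sum
`∑ᵢ g_j(i) α ^ (s i) = [n ∣ j + s] · n`, with `n ≠ 0` in `F`: `α ^ s` is a zero iff `s ≠ 0` and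
`n - s ∉ E`. For locality write `n = (r + 1) m`: along the positions `i, i + m, …, i + r m` the
vector `g_j` is a geometric progression of ratio `α ^ (m (j + 1))`, an `(r + 1)`-th root of unity
which is `≠ 1` because `r + 1 ∤ j + 1`, so the vanishing geometric sum is a parity check of
weight `r + 1` through every coordinate.
-/

section Development

open Polynomial Finset

variable {F : Type*} [Field F]

section Codes

variable {n : ℕ}

lemma sum_mul_eq_zero_of_mem_span {S : Set (Fin n → F)} {ι : Type*} (t : Finset ι)
    (e : ι → Fin n) (u : ι → F) (h : ∀ g ∈ S, ∑ s ∈ t, g (e s) * u s = 0) {c : Fin n → F}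
    (hc : c ∈ Submodule.span F S) : ∑ s ∈ t, c (e s) * u s = 0 := by
  induction hc using Submodule.span_induction with
  | mem g hg => exact h g hg
  | zero => simp
  | add x y _ _ hx hy => simp [add_mul, sum_add_distrib, hx, hy]
  | smul a x _ hx => simp only [Pi.smul_apply, smul_eq_mul, mul_assoc, ← mul_sum, hx, mul_zero]

lemma isCyclicCode_span [NeZero n] {S : Set (Fin n → F)}
    (hS : ∀ g ∈ S, (fun i : Fin n => g (i - 1)) ∈ Submodule.span F S) :
    IsCyclicCode (Submodule.span F S) := fun _ hc =>
  Submodule.span_le (p := (Submodule.span F S).comap (LinearMap.funLeft F F (· - 1))).2 hS hc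

lemma isRecoverySet_of_parityCheck {C : Submodule F (Fin n → F)} {ι : Type*} [DecidableEq ι]
    {t : Finset ι} {e : ι → Fin n} (he : Set.InjOn e t) (u : ι → F) {s₀ : ι} (hs₀ : s₀ ∈ t)
    (hu : u s₀ ≠ 0) (h : ∀ c ∈ C, ∑ s ∈ t, c (e s) * u s = 0) :
    IsRecoverySet C (e s₀) ((t.erase s₀).image e) := by
  refine ⟨fun hmem => ?_, fun x => -(u s₀)⁻¹ *
    ∑ s ∈ (t.erase s₀).attach, x ⟨e s, mem_image_of_mem e s.2⟩ * u s, fun c hc => ?_⟩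
  · obtain ⟨s, hs, hes⟩ := mem_image.1 hmem
    exact ne_of_mem_erase hs (he (mem_of_mem_erase hs) hs₀ hes)
  · have hsum := h c hc
    rw [← add_sum_erase t _ hs₀] at hsum
    show c (e s₀) = -(u s₀)⁻¹ * ∑ s ∈ (t.erase s₀).attach, c (e s) * u s
    rw [sum_attach (t.erase s₀) (fun s => c (e s) * u s)]
    field_simp
    linear_combination hsum

lemma hwt_add_card_zeros [DecidableEq F] (c : Fin n → F) : hwt c + #{i | c i = 0} = n := by
  rw [hwt, Nat.card_eq_fintype_card, Fintype.card_subtype, add_comm,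
    card_filter_add_card_filter_not, card_univ, Fintype.card_fin]

lemma minDist_eq_of_le_hwt {C : Submodule F (Fin n → F)} {d : ℕ}
    (hle : ∀ c ∈ C, c ≠ 0 → d ≤ hwt c) (hex : ∃ c ∈ C, c ≠ 0 ∧ hwt c ≤ d) : minDist C = d := by
  obtain ⟨c, hc, hc0, hcd⟩ := hex
  have hmem : hwt c ∈ {w | ∃ c ∈ C, c ≠ 0 ∧ hwt c = w} := ⟨c, hc, hc0, rfl⟩
  refine le_antisymm ((Nat.sInf_le hmem).trans hcd) (le_csInf ⟨_, hmem⟩ ?_)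
  rintro _ ⟨c', hc', hc0', rfl⟩
  exact hle c' hc' hc0'

end Codes

section Evaluation

variable {n : ℕ} {α : F}

lemma pow_val_sub_one_mul [NeZero n] (hα : α ^ n = 1) (i : Fin n) :
    α ^ ((i - 1 : Fin n) : ℕ) * α = α ^ (i : ℕ) := by
  rw [← pow_succ, pow_eq_pow_mod _ hα, ← Nat.add_mod_mod, ← Fin.val_one' n, ← Fin.val_add,
    sub_add_cancel]

open Fin.NatCast in
lemma pow_val_natCast [NeZero n] (hα : α ^ n = 1) (a : ℕ) : α ^ ((a : Fin n) : ℕ) = α ^ a := by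
  rw [Fin.val_natCast, ← pow_eq_pow_mod _ hα]

lemma pow_val_injective (hα : IsPrimitiveRoot α n) :
    Function.Injective fun i : Fin n => α ^ (i : ℕ) :=
  fun a b h => Fin.ext (hα.pow_inj a.isLt b.isLt h)

lemma geom_sum_eq_zero_of_pow_eq_one {x : F} {N : ℕ} (hx : x ≠ 1) (hxN : x ^ N = 1) :
    ∑ i ∈ range N, x ^ i = 0 := by
  rw [geom_sum_eq hx, hxN, sub_self, zero_div]

def powVec (α : F) (n j : ℕ) : Fin n → F := fun i => α ^ ((i : ℕ) * j)

noncomputable def evalPow (α : F) (n : ℕ) : F[X] →ₗ[F] (Fin n → F) :=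
  LinearMap.pi fun i => leval (α ^ (i : ℕ))

@[simp] lemma evalPow_apply (p : F[X]) (i : Fin n) : evalPow α n p i = p.eval (α ^ (i : ℕ)) :=
  rfl

lemma evalPow_X_pow (j : ℕ) : evalPow α n (X ^ j) = powVec α n j := by
  ext i
  simp [powVec, pow_mul]

lemma span_powVec_eq_map (S : Set ℕ) : Submodule.span F (powVec α n '' S) =
    (Submodule.span F ((fun j => (X : F[X]) ^ j) '' S)).map (evalPow α n) := by
  rw [Submodule.map_span, Set.image_image]
  simp_rw [evalPow_X_pow]

lemma evalPow_mem_span_powVec {S : Set ℕ} {p : F[X]} (hp : ∀ j ∈ p.support, j ∈ S) :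
    evalPow α n p ∈ Submodule.span F (powVec α n '' S) := by
  rw [span_powVec_eq_map]
  refine Submodule.mem_map_of_mem ?_
  rw [as_sum_support_C_mul_X_pow p]
  exact Submodule.sum_mem _ fun j hj => by
    rw [← smul_eq_C_mul]
    exact Submodule.smul_mem _ _ (Submodule.subset_span ⟨j, hp j hj, rfl⟩)

lemma card_zeros_evalPow_le [DecidableEq F] (hα : IsPrimitiveRoot α n) {p : F[X]} (hp : p ≠ 0) :
    #{i | evalPow α n p i = 0} ≤ p.natDegree := by
  rw [← card_image_of_injective _ (pow_val_injective hα)]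
  refine card_le_degree_of_subset_roots fun x hx => ?_
  obtain ⟨i, hi, rfl⟩ := mem_image.1 (mem_def.2 hx)
  exact (mem_roots hp).2 (mem_filter.1 hi).2

lemma le_hwt_of_mem_span_powVec (hα : IsPrimitiveRoot α n) {S : Set ℕ} {N : ℕ}
    (hS : ∀ j ∈ S, j ≤ N) {c : Fin n → F} (hc : c ∈ Submodule.span F (powVec α n '' S))
    (hc0 : c ≠ 0) : n - N ≤ hwt c := by
  classical
  rw [span_powVec_eq_map] at hc
  obtain ⟨p, hp, rfl⟩ := hc
  have hp0 : p ≠ 0 := by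
    rintro rfl
    exact hc0 (map_zero _)
  have hdeg : p ∈ degreeLE F N := Submodule.span_le.2 (by
    rintro _ ⟨j, hj, rfl⟩
    exact mem_degreeLE.2 ((degree_X_pow_le j).trans (by exact_mod_cast hS j hj))) hp
  have := natDegree_le_iff_degree_le.2 (mem_degreeLE.1 hdeg)
  have := card_zeros_evalPow_le hα hp0
  have := hwt_add_card_zeros (evalPow α n p)
  omega

lemma linearIndependent_powVec (hα : IsPrimitiveRoot α n) {S : Finset ℕ}
    (hS : ∀ j ∈ S, j < n) : LinearIndependent F fun j : S => powVec α n j := by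
  have hX : LinearIndependent F fun j : S => (X : F[X]) ^ (j : ℕ) := by
    simpa [Function.comp_def, X_pow_eq_monomial] using
      (basisMonomials F).linearIndependent.comp _ Subtype.val_injective
  have hdisj : Disjoint (Submodule.span F (Set.range fun j : S => (X : F[X]) ^ (j : ℕ)))
      (LinearMap.ker (evalPow α n)) := by
    rw [Submodule.disjoint_def]
    intro p hp hker
    by_contra hp0
    classical
    have hdeg : p ∈ degreeLT F n := Submodule.span_le.2 (by
      rintro _ ⟨j, rfl⟩
      exact mem_degreeLT.2 ((degree_X_pow_le _).trans_lt (by exact_mod_cast hS j j.2))) hp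
    have := (natDegree_lt_iff_degree_lt hp0).2 (mem_degreeLT.1 hdeg)
    have := card_zeros_evalPow_le hα hp0
    have hzero : ∀ i, evalPow α n p i = 0 := fun i => congrFun (LinearMap.mem_ker.1 hker) i
    simp only [hzero, filter_true, card_univ, Fintype.card_fin] at this
    omega
  simpa [Function.comp_def, evalPow_X_pow] using hX.map hdisj

lemma finrank_span_powVec (hα : IsPrimitiveRoot α n) {S : Finset ℕ} (hS : ∀ j ∈ S, j < n) :
    Module.finrank F (Submodule.span F (powVec α n '' S)) = #S := by
  rw [Set.image_eq_range]
  exact (finrank_span_eq_card (linearIndependent_powVec hα hS)).trans (Fintype.card_coe S)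

lemma isCyclicCode_span_powVec [NeZero n] (hα : IsPrimitiveRoot α n) (S : Set ℕ) :
    IsCyclicCode (Submodule.span F (powVec α n '' S)) := by
  refine isCyclicCode_span ?_
  rintro _ ⟨j, hj, rfl⟩
  have hshift : (fun i : Fin n => powVec α n j (i - 1)) = (α ^ j)⁻¹ • powVec α n j := by
    ext i
    have hα0 : α ^ j ≠ 0 := pow_ne_zero _ (hα.ne_zero (NeZero.ne n))
    simp only [powVec, Pi.smul_apply, smul_eq_mul, pow_mul, ← pow_val_sub_one_mul hα.pow_eq_one i,
      mul_pow]
    field_simp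
  rw [hshift]
  exact Submodule.smul_mem _ _ (Submodule.subset_span ⟨j, hj, rfl⟩)

lemma sum_powVec_mul_pow (hα : IsPrimitiveRoot α n) (j s : ℕ) :
    ∑ i : Fin n, powVec α n j i * (α ^ s) ^ (i : ℕ) = if n ∣ j + s then (n : F) else 0 := by
  have hterm : ∀ i : Fin n, powVec α n j i * (α ^ s) ^ (i : ℕ) = (α ^ (j + s)) ^ (i : ℕ) := by
    intro i
    simp only [powVec]
    ring
  rw [sum_congr rfl fun i _ => hterm i, Fin.sum_univ_eq_sum_range (fun i => (α ^ (j + s)) ^ i)]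
  split_ifs with h
  · simp [(hα.pow_eq_one_iff_dvd _).2 h]
  · refine geom_sum_eq_zero_of_pow_eq_one (fun h1 => h ((hα.pow_eq_one_iff_dvd _).1 h1)) ?_
    rw [← pow_mul, mul_comm, pow_mul, hα.pow_eq_one, one_pow]

lemma pow_mem_definingSet_span_powVec_iff [NeZero n] (hα : IsPrimitiveRoot α n) (S : Set ℕ)
    (s : ℕ) : α ^ s ∈ definingSet (Submodule.span F (powVec α n '' S)) ↔
      ∀ j ∈ S, ¬ n ∣ j + s := by
  have hn : (n : F) ≠ 0 := hα.neZero'.out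
  have hsn : (α ^ s) ^ n = 1 := by rw [← pow_mul, mul_comm, pow_mul, hα.pow_eq_one, one_pow]
  simp only [definingSet, Set.mem_ofPred_eq, hsn, true_and]
  constructor
  · intro h j hj hdvd
    have := h _ (Submodule.subset_span ⟨j, hj, rfl⟩)
    rw [sum_powVec_mul_pow hα, if_pos hdvd] at this
    exact hn this
  · intro h c hc
    refine sum_mul_eq_zero_of_mem_span univ id _ ?_ hc
    rintro _ ⟨j, hj, rfl⟩
    have := sum_powVec_mul_pow hα j s
    rw [if_neg (h j hj)] at this
    exact this

open Fin.NatCast in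
lemma sum_powVec_natCast_add_mul_mul_pow [NeZero n] (hα : IsPrimitiveRoot α n) {r m j : ℕ}
    (hm : n = (r + 1) * m) (hj : ¬ r + 1 ∣ j + 1) (a : ℕ) :
    ∑ s ∈ range (r + 1), powVec α n j ((a + m * s : ℕ) : Fin n) * α ^ (m * s) = 0 := by
  have hm0 : 0 < m := Nat.pos_of_ne_zero fun h => NeZero.ne n (by simpa [h] using hm)
  have hω : (α ^ (m * (j + 1))) ^ (r + 1) = 1 := by
    rw [← pow_mul, show m * (j + 1) * (r + 1) = n * (j + 1) by rw [hm]; ring, pow_mul,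
      hα.pow_eq_one, one_pow]
  have hω1 : α ^ (m * (j + 1)) ≠ 1 := by
    rw [Ne, hα.pow_eq_one_iff_dvd, hm, mul_comm m]
    exact fun h => hj (Nat.dvd_of_mul_dvd_mul_right hm0 h)
  calc ∑ s ∈ range (r + 1), powVec α n j ((a + m * s : ℕ) : Fin n) * α ^ (m * s)
      = α ^ (a * j) * ∑ s ∈ range (r + 1), (α ^ (m * (j + 1))) ^ s := by
        rw [mul_sum]
        refine sum_congr rfl fun s _ => ?_
        simp only [powVec, pow_mul, pow_val_natCast hα.pow_eq_one]
        ring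
    _ = 0 := by rw [geom_sum_eq_zero_of_pow_eq_one hω1 hω, mul_zero]

open Fin.NatCast in
lemma hasLocality_span_powVec [NeZero n] (hα : IsPrimitiveRoot α n) {r : ℕ} (hrn : r + 1 ∣ n)
    {S : Set ℕ} (hS : ∀ j ∈ S, ¬ r + 1 ∣ j + 1) :
    HasLocality (Submodule.span F (powVec α n '' S)) r := by
  obtain ⟨m, hm⟩ := hrn
  have hm0 : m ≠ 0 := fun h => NeZero.ne n (by simpa [h] using hm)
  intro i
  set e : ℕ → Fin n := fun s => ((i + m * s : ℕ) : Fin n)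
  have he0 : e 0 = i := by simp [e]
  have he : Set.InjOn e (range (r + 1)) := by
    intro s hs s' hs' h
    have h' : i + m * s ≡ i + m * s' [MOD m * (r + 1)] := by
      simp only [e, Fin.ext_iff, Fin.val_natCast, hm, mul_comm] at h
      exact h
    exact ((h'.add_left_cancel' _).mul_left_cancel' hm0).eq_of_lt_of_lt
      (mem_range.1 hs) (mem_range.1 hs')
  have hparity : ∀ c ∈ Submodule.span F (powVec α n '' S),
      ∑ s ∈ range (r + 1), c (e s) * α ^ (m * s) = 0 := by
    refine fun c hc => sum_mul_eq_zero_of_mem_span _ _ _ ?_ hc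
    rintro _ ⟨j, hj, rfl⟩
    exact sum_powVec_natCast_add_mul_mul_pow hα hm (hS j hj) i
  refine ⟨_, ?_, he0 ▸ isRecoverySet_of_parityCheck he _ (mem_range.2 r.succ_pos)
    (by simp) hparity⟩
  calc #(((range (r + 1)).erase 0).image e) ≤ #((range (r + 1)).erase 0) := card_image_le
    _ = r := by simp

end Evaluation

section Construction

variable {r μ : ℕ}

def lrcExponents (r μ : ℕ) : Finset ℕ := {j ∈ range (μ * (r + 1) - 1) | ¬ r + 1 ∣ j + 1}

lemma mem_lrcExponents {j : ℕ} :
    j ∈ lrcExponents r μ ↔ j + 1 < μ * (r + 1) ∧ ¬ r + 1 ∣ j + 1 := by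
  simp only [lrcExponents, mem_filter, mem_range]
  constructor <;> rintro ⟨h1, h2⟩ <;> exact ⟨by omega, h2⟩

lemma coe_lrcExponents (hr : 0 < r) (hμ : 0 < μ) : (lrcExponents r μ : Set ℕ) =
    {j | j ≤ μ * (r + 1) - 2} \ {j | ∃ l : ℕ, 1 ≤ l ∧ l ≤ μ - 1 ∧ j = l * (r + 1) - 1} := by
  have hM : r + 1 ≤ μ * (r + 1) := Nat.le_mul_of_pos_left _ hμ
  ext j
  simp only [mem_coe, mem_lrcExponents, Set.mem_sdiff, Set.mem_ofPred_eq, not_exists, not_and]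
  constructor
  · rintro ⟨h1, h2⟩
    refine ⟨by omega, fun l hl1 _ hj => h2 ?_⟩
    rw [hj, Nat.sub_add_cancel (Nat.mul_pos hl1 r.succ_pos)]
    exact dvd_mul_left _ _
  · rintro ⟨h1, h2⟩
    refine ⟨by omega, fun ⟨d, hd⟩ => ?_⟩
    have hdμ : d < μ := Nat.lt_of_mul_lt_mul_left (a := r + 1) (by rw [mul_comm (r + 1) μ]; omega)
    exact h2 d (Nat.pos_of_ne_zero (by rintro rfl; omega)) (by omega) (by rw [mul_comm]; omega)

lemma card_lrcExponents (hμ : 0 < μ) : #(lrcExponents r μ) = r * μ := by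
  have hsplit := card_filter_add_card_filter_not (s := range (μ * (r + 1) - 1))
    (p := fun j => r + 1 ∣ j + 1)
  have hdiv : (μ * (r + 1) - 1) / (r + 1) = μ - 1 := by
    obtain ⟨μ', rfl⟩ : ∃ μ', μ = μ' + 1 := ⟨μ - 1, by omega⟩
    rw [show (μ' + 1) * (r + 1) - 1 = r + (r + 1) * μ' by ring_nf; omega,
      Nat.add_mul_div_left _ _ r.succ_pos, Nat.div_eq_of_lt r.lt_succ_self]
    simp
  rw [Nat.card_multiples, card_range, hdiv] at hsplit
  rw [lrcExponents]
  have : μ * (r + 1) = r * μ + μ := by ring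
  omega

lemma forall_lrcExponents_not_dvd_add_iff (hr : 0 < r) (hμ : 0 < μ) {n s : ℕ}
    (hμn : μ * (r + 1) ≤ n) (hs : s < n) : (∀ j ∈ lrcExponents r μ, ¬ n ∣ j + s) ↔
      (1 ≤ s ∧ s ≤ n - μ * (r + 1) + 1) ∨
        ∃ l, 1 ≤ l ∧ l ≤ μ - 1 ∧ s = n - (μ - l) * (r + 1) + 1 := by
  have hM : r + 1 ≤ μ * (r + 1) := Nat.le_mul_of_pos_left _ hμ
  constructor
  · intro h
    have hs0 : s ≠ 0 := by
      rintro rfl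
      refine h 0 (mem_lrcExponents.2 ⟨by omega, ?_⟩) (dvd_zero n)
      rw [Nat.dvd_one]
      omega
    by_cases hsD : s ≤ n - μ * (r + 1) + 1
    · exact Or.inl ⟨by omega, hsD⟩
    · obtain ⟨d, hd⟩ : r + 1 ∣ n - s + 1 := by
        by_contra hnd
        exact h (n - s) (mem_lrcExponents.2 ⟨by omega, hnd⟩) (by rw [Nat.sub_add_cancel hs.le])
      have hdμ : d < μ :=
        Nat.lt_of_mul_lt_mul_left (a := r + 1) (by rw [mul_comm (r + 1) μ]; omega)
      have hd0 : 0 < d := Nat.pos_of_ne_zero (by rintro rfl; omega)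
      refine Or.inr ⟨μ - d, by omega, by omega, ?_⟩
      rw [Nat.sub_sub_self hdμ.le, mul_comm]
      omega
  · rintro (⟨hs1, hs2⟩ | ⟨l, hl1, hl2, rfl⟩) j hj hdvd <;>
      obtain ⟨hj1, hj2⟩ := mem_lrcExponents.1 hj
    · have := Nat.le_of_dvd (by omega) hdvd
      omega
    · have hl : r + 1 ≤ (μ - l) * (r + 1) := Nat.le_mul_of_pos_left _ (by omega)
      have hlμ : (μ - l) * (r + 1) ≤ μ * (r + 1) := Nat.mul_le_mul_right _ (by omega)
      have hjn := Nat.eq_of_dvd_of_lt_two_mul (by omega) hdvd (by omega)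
      exact hj2 ⟨μ - l, by rw [mul_comm]; omega⟩

variable {n : ℕ} {α : F}

def consecutiveZeros (α : F) (n r μ : ℕ) : Set F :=
  {β | ∃ i : ℕ, 1 ≤ i ∧ i ≤ n - μ * (r + 1) + 1 ∧ β = α ^ i}

def localZeros (α : F) (n r μ : ℕ) : Set F :=
  {β | ∃ l : ℕ, 1 ≤ l ∧ l ≤ μ - 1 ∧ β = α ^ (n - (μ - l) * (r + 1) + 1)}

lemma definingSet_span_powVec_lrcExponents [NeZero n] (hα : IsPrimitiveRoot α n) (hr : 0 < r)
    (hμ : 0 < μ) (hμn : μ * (r + 1) ≤ n) :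
    definingSet (Submodule.span F (powVec α n '' lrcExponents r μ)) =
      consecutiveZeros α n r μ ∪ localZeros α n r μ := by
  have hM : r + 1 ≤ μ * (r + 1) := Nat.le_mul_of_pos_left _ hμ
  ext β
  constructor
  · intro hβ
    obtain ⟨s, hs, rfl⟩ := hα.eq_pow_of_pow_eq_one hβ.1
    rcases (forall_lrcExponents_not_dvd_add_iff hr hμ hμn hs).1
      ((pow_mem_definingSet_span_powVec_iff hα _ s).1 hβ) with ⟨h1, h2⟩ | ⟨l, hl1, hl2, rfl⟩
    · exact Or.inl ⟨s, h1, h2, rfl⟩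
    · exact Or.inr ⟨l, hl1, hl2, rfl⟩
  · rintro (⟨s, h1, h2, rfl⟩ | ⟨l, hl1, hl2, rfl⟩)
    · exact (pow_mem_definingSet_span_powVec_iff hα _ s).2
        ((forall_lrcExponents_not_dvd_add_iff hr hμ hμn (by omega)).2 (Or.inl ⟨h1, h2⟩))
    · have hl : r + 1 ≤ (μ - l) * (r + 1) := Nat.le_mul_of_pos_left _ (by omega)
      have hlμ : (μ - l) * (r + 1) ≤ μ * (r + 1) := Nat.mul_le_mul_right _ (by omega)
      exact (pow_mem_definingSet_span_powVec_iff hα _ _).2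
        ((forall_lrcExponents_not_dvd_add_iff hr hμ hμn (by omega)).2
          (Or.inr ⟨l, hl1, hl2, rfl⟩))

lemma disjoint_consecutiveZeros_localZeros (hα : IsPrimitiveRoot α n) (hr : 0 < r)
    (hμn : μ * (r + 1) ≤ n) : Disjoint (consecutiveZeros α n r μ) (localZeros α n r μ) := by
  rw [Set.disjoint_left]
  rintro _ ⟨i, hi1, hi2, rfl⟩ ⟨l, hl1, hl2, h⟩
  have hl : r + 1 ≤ (μ - l) * (r + 1) := Nat.le_mul_of_pos_left _ (by omega)
  have hlμ : (μ - l) * (r + 1) + (r + 1) ≤ μ * (r + 1) := by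
    rw [← Nat.succ_mul]
    exact Nat.mul_le_mul_right _ (by omega)
  have := hα.pow_inj (by omega) (by omega) h
  omega

variable {m : ℕ}

lemma exists_eq_mul_add_of_mem_support_expand_mul {d : ℕ} (hd : 0 < d) {Q g : F[X]} {j : ℕ}
    (hj : j ∈ (expand F d Q * g).support) :
    ∃ a ≤ Q.natDegree, ∃ b ≤ g.natDegree, j = d * a + b := by
  rw [mem_support_iff, coeff_mul] at hj
  obtain ⟨⟨a, b⟩, hab, hne⟩ := exists_ne_zero_of_sum_ne_zero hj
  rw [HasAntidiagonal.mem_antidiagonal] at hab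
  rw [coeff_expand hd] at hne
  split_ifs at hne with hda
  · obtain ⟨a', rfl⟩ := hda
    rw [Nat.mul_div_cancel_left _ hd] at hne
    exact ⟨a', le_natDegree_of_ne_zero (left_ne_zero_of_mul hne), b,
      le_natDegree_of_ne_zero (right_ne_zero_of_mul hne), hab.symm⟩
  · simp at hne

/-- With `n = (r + 1) m`, the roots `α ^ (l + m s)` of the first factor (`1 ≤ l < μ`, `s ≤ r`)
and `α ^ (m t)` of the second (`t < r - 1`) are `μ (r + 1) - 2` distinct `n`-th roots of unity,
indexed by `minWeightIndices r μ`; the exponents `(r + 1) a + b` (`a < μ`, `b < r`) occurring in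
it all lie in `lrcExponents r μ`. -/
noncomputable def minWeightPoly (α : F) (r μ m : ℕ) : F[X] :=
  expand F (r + 1) (∏ l ∈ Icc 1 (μ - 1), (X - C (α ^ (l * (r + 1))))) *
    ∏ t ∈ range (r - 1), (X - C (α ^ (m * t)))

def minWeightIndices (r μ : ℕ) : Finset (ℕ × ℕ) :=
  Icc 1 (μ - 1) ×ˢ range (r + 1) ∪ {0} ×ˢ range (r - 1)

lemma minWeightPoly_ne_zero : minWeightPoly α r μ m ≠ 0 :=
  ((monic_prod_of_monic _ _ fun _ _ => monic_X_sub_C _).expand r.succ_pos).mul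
    (monic_prod_of_monic _ _ fun _ _ => monic_X_sub_C _) |>.ne_zero

lemma mem_lrcExponents_of_mem_support_minWeightPoly (hr : 0 < r) (hμ : 0 < μ) {j : ℕ}
    (hj : j ∈ (minWeightPoly α r μ m).support) : j ∈ lrcExponents r μ := by
  obtain ⟨a, ha, b, hb, rfl⟩ := exists_eq_mul_add_of_mem_support_expand_mul (by omega) hj
  simp only [natDegree_finsetProd_X_sub_C_eq_card, Nat.card_Icc, card_range] at ha hb
  have hle : (r + 1) * (a + 1) ≤ (r + 1) * μ := Nat.mul_le_mul_left _ (by omega)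
  rw [mul_add, mul_one, mul_comm (r + 1) μ] at hle
  refine mem_lrcExponents.2 ⟨by omega, fun hdvd => ?_⟩
  rw [add_assoc, Nat.dvd_add_right (dvd_mul_right _ _)] at hdvd
  have := Nat.le_of_dvd (by omega) hdvd
  omega

lemma card_minWeightIndices (hr : 0 < r) (hμ : 0 < μ) :
    #(minWeightIndices r μ) = μ * (r + 1) - 2 := by
  rw [minWeightIndices, card_union_of_disjoint, card_product, card_product, Nat.card_Icc,
    card_range, card_singleton, card_range]
  · obtain ⟨μ', rfl⟩ : ∃ μ', μ = μ' + 1 := ⟨μ - 1, by omega⟩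
    simp only [Nat.add_sub_cancel, add_mul, one_mul]
    omega
  · exact disjoint_product.2 (Or.inl (by simp))

lemma minWeightPoly_eval_eq_zero (hα : α ^ ((r + 1) * m) = 1) {x : ℕ × ℕ}
    (hx : x ∈ minWeightIndices r μ) : (minWeightPoly α r μ m).eval (α ^ (x.1 + m * x.2)) = 0 := by
  obtain ⟨l, s⟩ := x
  simp only [minWeightIndices, mem_union, mem_product, mem_Icc, mem_range, mem_singleton] at hx
  rw [minWeightPoly, eval_mul, eval_prod]
  rcases hx with ⟨hl, -⟩ | ⟨rfl, hs⟩
  · refine mul_eq_zero_of_left ?_ _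
    rw [expand_eval, eval_prod]
    refine prod_eq_zero (mem_Icc.2 hl) ?_
    have : (α ^ (l + m * s)) ^ (r + 1) = α ^ (l * (r + 1)) := by
      rw [← pow_mul, add_mul, pow_add, show m * s * (r + 1) = (r + 1) * m * s by ring,
        pow_mul α ((r + 1) * m), hα, one_pow, mul_one]
    simp [this]
  · exact mul_eq_zero_of_right _ (prod_eq_zero (mem_range.2 hs) (by simp))

lemma injOn_minWeightIndices (hμ : 0 < μ) (hμm : μ ≤ m) :
    Set.InjOn (fun x : ℕ × ℕ => x.1 + m * x.2) (minWeightIndices r μ) := by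
  have hlt : ∀ x ∈ minWeightIndices r μ, x.1 < m := by
    intro x hx
    simp only [minWeightIndices, mem_union, mem_product, mem_Icc, mem_singleton] at hx
    omega
  rintro ⟨l, s⟩ hx ⟨l', s'⟩ hx' h
  have hl := hlt _ hx
  have hl' := hlt _ hx'
  dsimp only at h hl hl'
  have hll : l = l' := by
    simpa [Nat.add_mul_mod_self_left, Nat.mod_eq_of_lt hl, Nat.mod_eq_of_lt hl'] using
      congrArg (· % m) h
  subst hll
  exact Prod.ext rfl (by simpa [(show 0 < m by omega).ne'] using h)

open Fin.NatCast in
lemma card_minWeightIndices_le_card_zeros [NeZero n] [DecidableEq F] (hα : IsPrimitiveRoot α n)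
    (hμ : 0 < μ) (hm : n = (r + 1) * m) (hμn : μ * (r + 1) ≤ n) :
    #(minWeightIndices r μ) ≤ #{i | evalPow α n (minWeightPoly α r μ m) i = 0} := by
  have hμm : μ ≤ m := Nat.le_of_mul_le_mul_right (by rwa [mul_comm m, ← hm]) r.succ_pos
  have hlt : ∀ x ∈ minWeightIndices r μ, x.1 + m * x.2 < n := by
    rintro ⟨l, s⟩ hx
    simp only [minWeightIndices, mem_union, mem_product, mem_Icc, mem_range, mem_singleton] at hx
    show l + m * s < n
    have : m * s ≤ m * r := Nat.mul_le_mul_left _ (by omega)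
    rw [hm, add_mul, one_mul, mul_comm r]
    omega
  refine card_le_card_of_injOn (fun x => ((x.1 + m * x.2 : ℕ) : Fin n)) (fun x hx => ?_) ?_
  · rw [mem_coe, mem_filter, evalPow_apply, pow_val_natCast hα.pow_eq_one]
    exact ⟨mem_univ _, minWeightPoly_eval_eq_zero (hm ▸ hα.pow_eq_one) hx⟩
  · intro x hx y hy h
    refine injOn_minWeightIndices hμ hμm hx hy ?_
    have h' := congrArg Fin.val h
    rwa [Fin.val_natCast, Fin.val_natCast, Nat.mod_eq_of_lt (hlt x hx),
      Nat.mod_eq_of_lt (hlt y hy)] at h'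

lemma minDist_span_powVec_lrcExponents [NeZero n] (hα : IsPrimitiveRoot α n) (hr : 0 < r)
    (hμ : 0 < μ) (hrn : r + 1 ∣ n) (hμn : μ * (r + 1) ≤ n) :
    minDist (Submodule.span F (powVec α n '' lrcExponents r μ)) = n - μ * (r + 1) + 2 := by
  classical
  have hM : r + 1 ≤ μ * (r + 1) := Nat.le_mul_of_pos_left _ hμ
  have hE : ∀ j ∈ (lrcExponents r μ : Set ℕ), j ≤ μ * (r + 1) - 2 := fun j hj => by
    have := (mem_lrcExponents.1 hj).1
    omega
  obtain ⟨m, hm⟩ := hrn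
  have hp0 : minWeightPoly α r μ m ≠ 0 := minWeightPoly_ne_zero
  have hdeg : (minWeightPoly α r μ m).natDegree ≤ μ * (r + 1) - 2 :=
    hE _ (mem_lrcExponents_of_mem_support_minWeightPoly hr hμ
      (natDegree_mem_support_of_nonzero hp0))
  have hupper := card_zeros_evalPow_le hα hp0
  have hlower := card_minWeightIndices_le_card_zeros hα hμ hm hμn
  rw [card_minWeightIndices hr hμ] at hlower
  have hsum := hwt_add_card_zeros (evalPow α n (minWeightPoly α r μ m))
  refine minDist_eq_of_le_hwt (fun c hc hc0 => ?_) ⟨evalPow α n (minWeightPoly α r μ m),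
    evalPow_mem_span_powVec fun j hj => mem_lrcExponents_of_mem_support_minWeightPoly hr hμ hj,
    fun h0 => ?_, by omega⟩
  · have := le_hwt_of_mem_span_powVec hα hE hc hc0
    omega
  · simp only [h0, Pi.zero_apply, filter_true, card_univ, Fintype.card_fin] at hupper
    omega

end Construction

end Development

theorem stmt0_general {F : Type*} [Field F] (n r k μ : ℕ) [NeZero n]
    (α : F) (hα : IsPrimitiveRoot α n)
    (hr : 0 < r) (hk : 0 < k) (hrk : r ∣ k) (hrn : (r + 1) ∣ n)
    (hμ : μ = k / r) (hμn : μ * (r + 1) ≤ n)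
    (J : Set ℕ)
    (hJ : J = {j | j ≤ μ * (r + 1) - 2} \ {j | ∃ l : ℕ, 1 ≤ l ∧ l ≤ μ - 1 ∧ j = l * (r + 1) - 1})
    (C : Submodule F (Fin n → F))
    (hC : C = Submodule.span F ((fun j : ℕ => fun i : Fin n => α ^ ((i : ℕ) * j)) '' J))
    (D L : Set F)
    (hD : D = {β | ∃ i : ℕ, 1 ≤ i ∧ i ≤ n - μ * (r + 1) + 1 ∧ β = α ^ i})
    (hL : L = {β | ∃ l : ℕ, 1 ≤ l ∧ l ≤ μ - 1 ∧ β = α ^ (n - (μ - l) * (r + 1) + 1)}) :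
    IsCyclicCode C ∧ definingSet C = D ∪ L ∧ Disjoint D L ∧
    Module.finrank F C = k ∧
    HasLocality C r ∧
    minDist C = n - μ * (r + 1) + 2 ∧
    minDist C = n - k - k / r + 2 := by
  have hμ0 : 0 < μ := hμ ▸ Nat.div_pos (Nat.le_of_dvd hk hrk) hr
  have hkμ : k = r * μ := hμ ▸ (Nat.mul_div_cancel' hrk).symm
  rw [← coe_lrcExponents hr hμ0] at hJ
  subst hJ
  obtain rfl : C = Submodule.span F (powVec α n '' lrcExponents r μ) := hC
  subst hD hL
  have hdist := minDist_span_powVec_lrcExponents hα hr hμ0 hrn hμn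
  refine ⟨isCyclicCode_span_powVec hα _, definingSet_span_powVec_lrcExponents hα hr hμ0 hμn,
    disjoint_consecutiveZeros_localZeros hα hr hμn, ?_,
    hasLocality_span_powVec hα hrn fun j hj => (mem_lrcExponents.1 hj).2, hdist, ?_⟩
  · have hE : ∀ j ∈ lrcExponents r μ, j < n := fun j hj => by
      have := (mem_lrcExponents.1 hj).1
      omega
    rw [finrank_span_powVec hα hE, card_lrcExponents hμ0, hkμ]
  · rw [hdist, ← hμ, hkμ, show μ * (r + 1) = r * μ + μ by ring]
    omega

/-- The cyclic Reed-Solomon-like LRC code: characterization of its zeros,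
dimension, locality, and optimal minimum distance. -/
theorem stmt0 {F : Type*} [Field F] [Fintype F] (q n r k μ : ℕ) [NeZero n]
    (hq : Fintype.card F = q) (hn : 0 < n) (hnq : n ∣ q - 1)
    (α : F) (hα : IsPrimitiveRoot α n)
    (hr : 0 < r) (hk : 0 < k) (hrk : r ∣ k) (hrn : (r + 1) ∣ n)
    (hμ : μ = k / r) (hμn : μ * (r + 1) ≤ n)
    (J : Set ℕ)
    (hJ : J = {j | j ≤ μ * (r + 1) - 2} \ {j | ∃ l : ℕ, 1 ≤ l ∧ l ≤ μ - 1 ∧ j = l * (r + 1) - 1})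
    (C : Submodule F (Fin n → F))
    (hC : C = Submodule.span F ((fun j : ℕ => fun i : Fin n => α ^ ((i : ℕ) * j)) '' J))
    (D L : Set F)
    (hD : D = {β | ∃ i : ℕ, 1 ≤ i ∧ i ≤ n - μ * (r + 1) + 1 ∧ β = α ^ i})
    (hL : L = {β | ∃ l : ℕ, 1 ≤ l ∧ l ≤ μ - 1 ∧ β = α ^ (n - (μ - l) * (r + 1) + 1)}) :
    IsCyclicCode C ∧ definingSet C = D ∪ L ∧ Disjoint D L ∧
    Module.finrank F C = k ∧
    HasLocality C r ∧
    minDist C = n - μ * (r + 1) + 2 ∧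
    minDist C = n - k - k / r + 2 :=
  stmt0_general n r k μ α hα hr hk hrk hrn hμ hμn J hJ C hC D L hD hL

end LRC
end

section
/- Let q be a prime power, n | q−1, α ∈ F_q a primitive n-th root of unity, r a positive integer with (r+1) | n, ν = n/(r+1), and 0 ≤ l ≤ r an integer. For m = 0, 1, …, ν−1 let h_m ∈ F_q^n be the vector whose j-th coordinate is α^{j(m(r+1)+l)}, j = 0, …, n−1. Let v ∈ F_q^n be the vector of Hamming weight r+1 whose coordinate iν equals α^{ilν} for i = 0, 1, …, r and whose remaining coordinates are 0. Then every cyclic shift of v is contained in the F_q-linear span of h_0, h_1, …, h_{ν−1}. -/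
open scoped BigOperators

namespace LRC

/-! Each `h_m` is an eigenvector of every cyclic shift, so their span is shift-invariant and it
suffices to show `v` in the span. With `β = α ^ (r + 1)` a primitive `ν`-th root of unity,
orthogonality of characters gives `∑ m, β ^ (j * m) = ν` if `ν ∣ j` and `0` otherwise, hence
`v = ν⁻¹ • ∑ m, h m`; `ν` is invertible in `F` because `F` contains a primitive `ν`-th root of
unity. -/

open Submodule

theorem pow_val_sub_ofNat_mul {M : Type*} [Monoid M] {n : ℕ} [NeZero n] {α : M} (hα : α ^ n = 1)
    (e t : ℕ) (i : Fin n) :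
    α ^ ((i - Fin.ofNat n t : Fin n) * e) = α ^ ((n - t % n) * e) * α ^ ((i : ℕ) * e) := by
  have hαe : (α ^ e) ^ n = 1 := by rw [pow_right_comm, hα, one_pow]
  simp only [mul_comm _ e, pow_mul, Fin.val_sub, Fin.val_ofNat, ← pow_eq_pow_mod _ hαe, pow_add]

section
variable {F : Type*} [Field F]

theorem shift_mem_span_range_pow {n : ℕ} [NeZero n] {ι : Type*} {α : F} (hα : α ^ n = 1)
    (e : ι → ℕ) (t : ℕ) {w : Fin n → F}
    (hw : w ∈ span F (Set.range fun (m : ι) (j : Fin n) => α ^ ((j : ℕ) * e m))) :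
    (fun i : Fin n => w (i - Fin.ofNat n t)) ∈
      span F (Set.range fun (m : ι) (j : Fin n) => α ^ ((j : ℕ) * e m)) := by
  refine (map_span_le (LinearMap.funLeft F F fun i : Fin n => i - Fin.ofNat n t) _ _).2 ?_
    (mem_map_of_mem hw)
  rintro _ ⟨m, rfl⟩
  have heigen : (LinearMap.funLeft F F fun i : Fin n => i - Fin.ofNat n t)
      (fun j : Fin n => α ^ ((j : ℕ) * e m)) =
        α ^ ((n - t % n) * e m) • fun j : Fin n => α ^ ((j : ℕ) * e m) := by
    ext i
    simp only [LinearMap.funLeft_apply, Pi.smul_apply, smul_eq_mul, pow_val_sub_ofNat_mul hα]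
  rw [heigen]
  exact smul_mem _ _ (subset_span ⟨m, rfl⟩)

theorem sum_pow_mul_eq_ite {β : F} {ν : ℕ} (hβ : IsPrimitiveRoot β ν) (k : ℕ) :
    ∑ m : Fin ν, β ^ (k * m) = if ν ∣ k then (ν : F) else 0 := by
  simp only [pow_mul, Fin.sum_univ_eq_sum_range (fun m => (β ^ k) ^ m)]
  split_ifs with hk
  · simp [(hβ.pow_eq_one_iff_dvd k).2 hk]
  · rw [geom_sum_eq (mt (hβ.pow_eq_one_iff_dvd k).1 hk), ← pow_mul, mul_comm, pow_mul,
      hβ.pow_eq_one, one_pow, sub_self, zero_div]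

theorem inv_mul_sum_pow_eq_ite {α : F} {d ν : ℕ} [NeZero ν] (hβ : IsPrimitiveRoot (α ^ d) ν)
    (l j : ℕ) :
    (ν : F)⁻¹ * ∑ m : Fin ν, α ^ (j * (m * d + l)) = if ν ∣ j then α ^ (l * j) else 0 := by
  have hν : (ν : F) ≠ 0 := hβ.neZero'.out
  have hsplit : ∀ m : Fin ν, α ^ (j * (m * d + l)) = α ^ (l * j) * (α ^ d) ^ (j * m) := by
    intro m
    rw [← pow_mul, ← pow_add]
    ring_nf
  simp only [hsplit, ← Finset.mul_sum, sum_pow_mul_eq_ite hβ]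
  split_ifs
  · field_simp
  · simp

end

theorem stmt1_general {F : Type*} [Field F] (n r ν l : ℕ) [NeZero n]
    (α : F) (hα : IsPrimitiveRoot α n)
    (hrn : (r + 1) ∣ n) (hν : ν = n / (r + 1))
    (h : Fin ν → (Fin n → F))
    (hh : ∀ (m : Fin ν) (j : Fin n), h m j = α ^ ((j : ℕ) * ((m : ℕ) * (r + 1) + l)))
    (v : Fin n → F)
    (hv : ∀ j : Fin n, v j = if ν ∣ (j : ℕ) then α ^ (l * (j : ℕ)) else 0) :
    ∀ t : ℕ, (fun i : Fin n => v (i - (Fin.ofNat n t))) ∈ Submodule.span F (Set.range h) := by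
  intro t
  have hnν : n = (r + 1) * ν := by rw [hν, Nat.mul_div_cancel' hrn]
  have hβ : IsPrimitiveRoot (α ^ (r + 1)) ν := hα.pow (NeZero.pos n) hnν
  have : NeZero ν := ⟨right_ne_zero_of_mul (hnν ▸ NeZero.ne n)⟩
  have hv_mem : v ∈ span F (Set.range h) := by
    have hv_sum : v = ∑ m, (ν : F)⁻¹ • h m := by
      ext j
      simp only [hv, hh, ← inv_mul_sum_pow_eq_ite hβ l j, Finset.sum_apply, Pi.smul_apply,
        smul_eq_mul, Finset.mul_sum]
    rw [hv_sum]
    exact sum_mem fun m _ => smul_mem _ _ (subset_span ⟨m, rfl⟩)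
  obtain rfl : h = fun (m : Fin ν) (j : Fin n) => α ^ ((j : ℕ) * ((m : ℕ) * (r + 1) + l)) :=
    funext₂ hh
  exact shift_mem_span_range_pow hα.pow_eq_one _ t hv_mem

/-- every cyclic shift of the weight-(r+1) vector `v` lies in the span of the
vectors `h_m`. -/
theorem stmt1 {F : Type*} [Field F] [Fintype F] (q n r ν l : ℕ) [NeZero n]
    (hq : Fintype.card F = q) (hn : n ∣ q - 1)
    (α : F) (hα : IsPrimitiveRoot α n)
    (hr : 0 < r) (hrn : (r + 1) ∣ n) (hν : ν = n / (r + 1)) (hl : l ≤ r)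
    (h : Fin ν → (Fin n → F))
    (hh : ∀ (m : Fin ν) (j : Fin n), h m j = α ^ ((j : ℕ) * ((m : ℕ) * (r + 1) + l)))
    (v : Fin n → F)
    (hv : ∀ j : Fin n, v j = if ν ∣ (j : ℕ) then α ^ (l * (j : ℕ)) else 0) :
    ∀ t : ℕ, (fun i : Fin n => v (i - (Fin.ofNat n t))) ∈ Submodule.span F (Set.range h) :=
  stmt1_general n r ν l α hα hrn hν h hh v hv

end LRC
end

section
/- Let q be a prime power, n | q−1, and α ∈ F_q a primitive n-th root of unity. Let C be a cyclic code of length n over F_q with complete defining set Z(C), and let r be a positive integer such that (r+1) | n, with ν = n/(r+1). If Z(C) contains some coset α^l·{α^{j(r+1)} : 0 ≤ j ≤ ν−1} of the group of ν-th roots of unity (for some integer l), then C has locality at most r. -/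
open scoped BigOperators

namespace LRC

/-- if the complete defining set of a cyclic code contains a coset of the group of
ν-th roots of unity, the code has locality at most r. -/
theorem stmt2 {F : Type*} [Field F] [Fintype F] (q n r ν : ℕ) [NeZero n]
    (hq : Fintype.card F = q) (hn : n ∣ q - 1)
    (α : F) (hα : IsPrimitiveRoot α n)
    (hr : 0 < r) (hrn : (r + 1) ∣ n) (hν : ν = n / (r + 1))
    (C : Submodule F (Fin n → F)) (hcyc : IsCyclicCode C)
    (l : ℤ)
    (hl : {β | ∃ j : ℕ, j < ν ∧ β = α ^ l * α ^ (j * (r + 1))} ⊆ definingSet C) :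
    HasLocality C r := by
  intro i
  have hn0 : 0 < n := Nat.pos_of_ne_zero (NeZero.ne n)
  have hnν : n = (r + 1) * ν := by rw [hν, Nat.mul_div_cancel' hrn]
  have hν0 : 0 < ν := by
    rcases Nat.eq_zero_or_pos ν with h | h
    · rw [h, mul_zero] at hnν; omega
    · exact h
  have hνn : ν ∣ n := ⟨r + 1, by rw [hnν]; ring⟩
  set γ : F := α ^ (r + 1) with hγdef
  have hγ : IsPrimitiveRoot γ ν := hα.pow hn0 hnν
  have hα0 : α ≠ 0 := hα.ne_zero (NeZero.ne n)
  set δ : F := α ^ l with hδdef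
  have hδ0 : δ ≠ 0 := zpow_ne_zero _ hα0
  -- ν is nonzero as an element of F
  haveI : CharP F (ringChar F) := ringChar.charP F
  have hνF : (ν : F) ≠ 0 := by
    intro h
    obtain ⟨k, hkp, hk⟩ := FiniteField.card F (ringChar F)
    have hpν : ringChar F ∣ ν := (CharP.cast_eq_zero_iff F (ringChar F) ν).mp h
    have hpq1 : ringChar F ∣ q - 1 := hpν.trans (hνn.trans hn)
    have hpq : ringChar F ∣ q := by
      rw [← hq, hk]
      exact dvd_pow_self _ (by positivity)
    have hq2 : 2 ≤ q := by
      rw [← hq, hk]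
      calc 2 ≤ ringChar F := hkp.two_le
        _ ≤ ringChar F ^ (k : ℕ) := Nat.le_self_pow (by positivity) _
    have : ringChar F ∣ q - (q - 1) := Nat.dvd_sub hpq hpq1
    rw [show q - (q - 1) = 1 by omega] at this
    exact hkp.one_lt.ne' (Nat.dvd_one.mp this)
  -- geometric sum over ν-th roots of unity
  have hgeom : ∀ k : ℕ, ∑ j ∈ Finset.range ν, γ ^ (j * k) = if ν ∣ k then (ν : F) else 0 := by
    intro k
    by_cases h : ν ∣ k
    · rw [if_pos h]
      rw [Finset.sum_congr rfl (fun j _ => by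
        rw [mul_comm, pow_mul, (hγ.pow_eq_one_iff_dvd k).mpr h, one_pow])]
      simp
    · rw [if_neg h]
      have hx1 : γ ^ k ≠ 1 := fun hh => h ((hγ.pow_eq_one_iff_dvd k).mp hh)
      have hrw : ∑ j ∈ Finset.range ν, γ ^ (j * k) = ∑ j ∈ Finset.range ν, (γ ^ k) ^ j := by
        refine Finset.sum_congr rfl fun j _ => ?_
        rw [pow_mul']
      have hone : (γ ^ k) ^ ν = 1 := by
        rw [← pow_mul, mul_comm, pow_mul, hγ.pow_eq_one, one_pow]
      rw [hrw, geom_sum_eq hx1, hone]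
      simp
  -- divisibility criterion
  have hiff : ∀ m : Fin n, ν ∣ (n - (i : ℕ) + (m : ℕ)) ↔ (m : ℕ) % ν = (i : ℕ) % ν := by
    intro m
    have hi : (i : ℕ) ≤ n := le_of_lt i.isLt
    have e : n - (i : ℕ) + (m : ℕ) + (i : ℕ) = n + (m : ℕ) := by omega
    constructor
    · intro h
      have h1 : (n - (i : ℕ) + (m : ℕ)) ≡ 0 [MOD ν] := Nat.modEq_zero_iff_dvd.mpr h
      have h2 : n + (m : ℕ) ≡ (i : ℕ) [MOD ν] := by
        have := h1.add_right (i : ℕ)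
        rwa [e, zero_add] at this
      have h3 : n + (m : ℕ) ≡ 0 + (m : ℕ) [MOD ν] :=
        Nat.ModEq.add_right _ (Nat.modEq_zero_iff_dvd.mpr hνn)
      have := (h3.symm.trans h2)
      simpa [Nat.ModEq] using this
    · intro h
      have h2 : (m : ℕ) ≡ (i : ℕ) [MOD ν] := h
      have h3 : n + (m : ℕ) ≡ 0 + (i : ℕ) [MOD ν] :=
        Nat.ModEq.add (Nat.modEq_zero_iff_dvd.mpr hνn) h2
      have h4 : (n - (i : ℕ) + (m : ℕ)) + (i : ℕ) ≡ 0 + (i : ℕ) [MOD ν] := by rw [e]; exact h3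
      have h5 : (n - (i : ℕ) + (m : ℕ)) ≡ 0 [MOD ν] := h4.add_right_cancel' _
      exact Nat.modEq_zero_iff_dvd.mp h5
  -- the key parity-check identity
  have hkey : ∀ c ∈ C,
      ∑ m ∈ Finset.univ.filter (fun m : Fin n => (m : ℕ) % ν = (i : ℕ) % ν),
        c m * δ ^ (m : ℕ) = 0 := by
    intro c hc
    have h0 : ∑ j ∈ Finset.range ν,
        γ ^ (j * (n - (i : ℕ))) * (∑ m : Fin n, c m * (α ^ l * α ^ (j * (r + 1))) ^ (m : ℕ))
        = 0 := by
      apply Finset.sum_eq_zero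
      intro j hj
      have hβ := (hl ⟨j, Finset.mem_range.mp hj, rfl⟩).2 c hc
      rw [hβ, mul_zero]
    have h1 : ∀ j ∈ Finset.range ν,
        γ ^ (j * (n - (i : ℕ))) * (∑ m : Fin n, c m * (α ^ l * α ^ (j * (r + 1))) ^ (m : ℕ))
        = ∑ m : Fin n, c m * δ ^ (m : ℕ) * γ ^ (j * (n - (i : ℕ) + (m : ℕ))) := by
      intro j _
      rw [Finset.mul_sum]
      refine Finset.sum_congr rfl fun m _ => ?_
      have e1 : (α ^ (j * (r + 1))) ^ (m : ℕ) = γ ^ (j * (m : ℕ)) := by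
        rw [hγdef, ← pow_mul, ← pow_mul]
        ring_nf
      rw [mul_pow, e1, show j * (n - (i : ℕ) + (m : ℕ)) = j * (n - (i : ℕ)) + j * (m : ℕ) from
        Nat.mul_add j _ _, pow_add, ← hδdef]
      ring
    rw [Finset.sum_congr rfl h1, Finset.sum_comm] at h0
    have h2 : ∀ m : Fin n,
        ∑ j ∈ Finset.range ν, c m * δ ^ (m : ℕ) * γ ^ (j * (n - (i : ℕ) + (m : ℕ)))
        = if (m : ℕ) % ν = (i : ℕ) % ν then c m * δ ^ (m : ℕ) * (ν : F) else 0 := by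
      intro m
      rw [← Finset.mul_sum, hgeom]
      by_cases h : (m : ℕ) % ν = (i : ℕ) % ν
      · rw [if_pos ((hiff m).mpr h), if_pos h]
      · rw [if_neg (fun hd => h ((hiff m).mp hd)), if_neg h, mul_zero]
    rw [Finset.sum_congr rfl (fun m _ => h2 m)] at h0
    rw [Finset.sum_ite, Finset.sum_const_zero, add_zero, ← Finset.sum_mul] at h0
    rcases mul_eq_zero.mp h0 with h | h
    · exact h
    · exact absurd h hνF
  -- the recovery set
  have hlt : ∀ k, k < r + 1 → (i : ℕ) % ν + k * ν < n := by
    intro k hk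
    have h1 : (i : ℕ) % ν < ν := Nat.mod_lt _ hν0
    have : (i : ℕ) % ν + k * ν < ν + k * ν := by omega
    calc (i : ℕ) % ν + k * ν < ν + k * ν := this
      _ = (k + 1) * ν := by ring
      _ ≤ (r + 1) * ν := Nat.mul_le_mul_right _ (by omega)
      _ = n := hnν.symm
  have hidiv : (i : ℕ) / ν < r + 1 := by
    rw [Nat.div_lt_iff_lt_mul hν0]
    calc (i : ℕ) < n := i.isLt
      _ = (r + 1) * ν := hnν
  set A : Finset (Fin n) :=
    ((Finset.range (r + 1)).filter (fun k => k ≠ (i : ℕ) / ν)).image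
      (fun k => if h : (i : ℕ) % ν + k * ν < n then (⟨(i : ℕ) % ν + k * ν, h⟩ : Fin n) else i)
    with hA
  refine ⟨A, ?_, ?_, ?_⟩
  · -- card bound
    calc A.card ≤ ((Finset.range (r + 1)).filter (fun k => k ≠ (i : ℕ) / ν)).card :=
        Finset.card_image_le
      _ = ((Finset.range (r + 1)).erase ((i : ℕ) / ν)).card := by rw [Finset.filter_ne']
      _ = r := by rw [Finset.card_erase_of_mem (Finset.mem_range.mpr hidiv)]; simp
  · -- i ∉ A
    intro hmem
    rw [hA, Finset.mem_image] at hmem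
    obtain ⟨k, hk, hki⟩ := hmem
    rw [Finset.mem_filter, Finset.mem_range] at hk
    rw [dif_pos (hlt k hk.1)] at hki
    have : (i : ℕ) = (i : ℕ) % ν + k * ν := by
      have := congrArg (fun x : Fin n => (x : ℕ)) hki
      simpa using this.symm
    have hkd : k = (i : ℕ) / ν := by
      have hdm := Nat.div_add_mod (i : ℕ) ν
      have : k * ν = ν * ((i : ℕ) / ν) := by omega
      have := this
      nlinarith [Nat.mod_lt (i : ℕ) hν0]
    exact hk.2 hkd
  · -- recovery function
    refine ⟨fun v => -(δ ^ (i : ℕ))⁻¹ * ∑ j : A, v j * δ ^ ((j : Fin n) : ℕ), ?_⟩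
    intro c hc
    have hsplit : Finset.univ.filter (fun m : Fin n => (m : ℕ) % ν = (i : ℕ) % ν)
        = insert i A := by
      ext m
      simp only [Finset.mem_filter, Finset.mem_univ, true_and, Finset.mem_insert, hA,
        Finset.mem_image, Finset.mem_filter, Finset.mem_range]
      constructor
      · intro h
        by_cases hmi : m = i
        · exact Or.inl hmi
        · refine Or.inr ⟨(m : ℕ) / ν, ⟨?_, ?_⟩, ?_⟩
          · rw [Nat.div_lt_iff_lt_mul hν0]
            calc (m : ℕ) < n := m.isLt
              _ = (r + 1) * ν := hnν
          · intro heq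
            apply hmi
            have h1 := Nat.div_add_mod (m : ℕ) ν
            have h2 := Nat.div_add_mod (i : ℕ) ν
            rw [heq, h] at h1
            exact Fin.ext (by omega)
          · have hm : (i : ℕ) % ν + (m : ℕ) / ν * ν < n := by
              rw [← h, Nat.mod_add_div']
              exact m.isLt
            rw [dif_pos hm]
            apply Fin.ext
            simp only []
            rw [← h, Nat.mod_add_div']
      · intro h
        rcases h with h | ⟨k, ⟨hk, _⟩, hkm⟩
        · rw [h]
        · rw [dif_pos (hlt k hk)] at hkm
          rw [← hkm]
          simp [Nat.add_mul_mod_self_right]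
    have h0 := hkey c hc
    rw [hsplit] at h0
    have hiA : i ∉ A := by
      intro hmem
      rw [hA, Finset.mem_image] at hmem
      obtain ⟨k, hk, hki⟩ := hmem
      rw [Finset.mem_filter, Finset.mem_range] at hk
      rw [dif_pos (hlt k hk.1)] at hki
      have : (i : ℕ) = (i : ℕ) % ν + k * ν := by
        have := congrArg (fun x : Fin n => (x : ℕ)) hki
        simpa using this.symm
      have hkd : k = (i : ℕ) / ν := by
        have hdm := Nat.div_add_mod (i : ℕ) ν
        nlinarith [Nat.mod_lt (i : ℕ) hν0]
      exact hk.2 hkd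
    rw [Finset.sum_insert hiA] at h0
    have hδi : (δ ^ (i : ℕ)) ≠ 0 := pow_ne_zero _ hδ0
    show c i = -(δ ^ (i : ℕ))⁻¹ * ∑ j : A, (fun j : A => c j) j * δ ^ ((j : Fin n) : ℕ)
    simp only []
    rw [Finset.sum_coe_sort A (fun m => c m * δ ^ (m : ℕ))]
    have hS : ∑ m ∈ A, c m * δ ^ (m : ℕ) = -(c i * δ ^ (i : ℕ)) := by linear_combination h0
    rw [hS]
    field_simp

end LRC
end

section
/- Let n be an odd positive integer and z ≥ 1 an integer such that (2^z − 1) | n. Let F_{2^m} be the splitting field of x^n − 1 over F_2 and α ∈ F_{2^m} a primitive n-th root of unity. Let D be a binary linear cyclic code of length n whose complete defining set Z(D) contains the coset α·G_{2^z−1} = {α^{1+j(2^z−1)} : 0 ≤ j < n/(2^z−1)} of the subgroup G_{2^z−1} generated by α^{2^z−1}. Then D has locality r ≤ 2^{z−1} − 1; moreover, for every coordinate i ∈ {0,…,n−1} there exist at least 2^{z−1} distinct recovery sets A ⊆ {0,…,n−1}\{i} for coordinate i, each of size 2^{z−1} − 1. -/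
/-!
Let `n = (2^z - 1) e` and `γ = α^e`, a generator of `𝔽_{2^z}^×`. Summing the zeros
`c(αβ) = 0`, `β ∈ G_{2^z-1}`, weighted by `(αβ)^{-i}`, kills every term except those at the
positions `i + t e`, and leaves the `𝔽_{2^z}`-linear check `∑_{t < 2^z-1} c_{i+te} γ^t = 0`.
For `ζ ∈ 𝔽_{2^z}` of trace one, applying `Tr_{𝔽_{2^z}/𝔽₂}(ζ · _)` turns it into the binary
check `∑ {c_{i+te} | Tr(ζ γ^t) = 1} = 0`, which contains `t = 0`; this recovers `c_i` from
`2^{z-1} - 1` other coordinates, because exactly `2^{z-1}` elements of `𝔽_{2^z}^×` have trace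
one. The trace form is nondegenerate, so the `2^{z-1}` elements `ζ` of trace one give distinct
recovery sets. Both counting facts come from the degree `2^{z-1}` of the trace polynomial
`X + X^2 + ⋯ + X^{2^{z-1}}`.
-/

open scoped BigOperators

namespace LRC

open Finset Polynomial

theorem mul_pow_pow_two_pow {M : Type*} [CommMonoid M] {z : ℕ} {γ ζ : M}
    (hγ : γ ^ (2 ^ z - 1) = 1) (hζ : ζ ^ 2 ^ z = ζ) (t : ℕ) :
    (ζ * γ ^ t) ^ 2 ^ z = ζ * γ ^ t := by
  have hγz : γ ^ 2 ^ z = γ := by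
    rw [← Nat.sub_add_cancel Nat.one_le_two_pow, pow_succ, hγ, one_mul]
  rw [mul_pow, hζ, ← pow_mul, mul_comm t, pow_mul, hγz]

section BinaryTrace

variable (K : Type*) [CommRing K] [CharP K 2]

/-- `x + x^2 + ⋯ + x^(2^(z-1))`: on the subfield `𝔽_{2^z}` this is the trace to `𝔽₂`. -/
noncomputable def binaryTrace (z : ℕ) : K →+ K :=
  ∑ j ∈ range z, (iterateFrobenius K 2 j).toAddMonoidHom

variable {K}

theorem binaryTrace_apply (z : ℕ) (x : K) : binaryTrace K z x = ∑ j ∈ range z, x ^ 2 ^ j := by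
  simp [binaryTrace, iterateFrobenius_def]

theorem binaryTrace_mul_of_sq_eq_self {a : K} (ha : a ^ 2 = a) (z : ℕ) (x : K) :
    binaryTrace K z (a * x) = a * binaryTrace K z x := by
  have ha' : IsIdempotentElem a := by rwa [IsIdempotentElem, ← sq]
  simp [binaryTrace_apply, mul_pow, ha'.pow_eq (pow_ne_zero _ two_ne_zero), mul_sum]

theorem binaryTrace_sq {z : ℕ} {x : K} (hx : x ^ 2 ^ z = x) :
    binaryTrace K z x ^ 2 = binaryTrace K z x := by
  have hshift := (sum_range_succ' (fun j => x ^ 2 ^ j) z).symm.trans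
    (sum_range_succ (fun j => x ^ 2 ^ j) z)
  rw [pow_zero, pow_one, hx, add_left_inj] at hshift
  simp only [binaryTrace_apply, sum_pow_char, ← pow_mul, ← pow_succ, hshift]

end BinaryTrace

section TraceOverSubfield

open scoped Classical

variable {K : Type*} [Field K] [CharP K 2] {z : ℕ}

theorem binaryTrace_eq_zero_or_one {x : K} (hx : x ^ 2 ^ z = x) :
    binaryTrace K z x = 0 ∨ binaryTrace K z x = 1 :=
  IsIdempotentElem.iff_eq_zero_or_one.mp (by rw [IsIdempotentElem, ← sq, binaryTrace_sq hx])

theorem card_le_of_binaryTrace_eq (hz : z ≠ 0) (b : K) {S : Finset K}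
    (hS : ∀ x ∈ S, binaryTrace K z x = b) : #S ≤ 2 ^ (z - 1) := by
  obtain ⟨z, rfl⟩ := Nat.exists_eq_succ_of_ne_zero hz
  set Q : K[X] := ∑ j ∈ range z, X ^ 2 ^ j - C b
  have hQ : Q.degree < ↑(2 ^ z) := by
    refine (degree_sub_le _ _).trans_lt (max_lt ?_ ((degree_C_le).trans_lt (by simp)))
    refine (degree_sum_le _ _).trans_lt ((Finset.sup_lt_iff (WithBot.bot_lt_coe _)).2 ?_)
    intro j hj
    rw [degree_X_pow]
    exact_mod_cast Nat.pow_lt_pow_right one_lt_two (mem_range.1 hj)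
  have hP : (X ^ 2 ^ z + Q).Monic := monic_X_pow_add hQ
  calc #S ≤ (X ^ 2 ^ z + Q).natDegree := by
        refine card_le_degree_of_subset_roots fun x hx => (mem_roots hP.ne_zero).2 ?_
        have := hS x hx
        rw [binaryTrace_apply, sum_range_succ] at this
        simp [Q, eval_finsetSum, ← this]
    _ = 2 ^ (z + 1 - 1) := by
        rw [natDegree_add_eq_left_of_degree_lt (by rwa [degree_X_pow]), natDegree_X_pow]; rfl

theorem sum_filter_binaryTrace_eq_one_eq_zero {ι : Type*} (S : Finset ι) {x y : ι → K}
    (hx : ∀ t, x t ^ 2 = x t) (hy : ∀ t, y t ^ 2 ^ z = y t) (h : ∑ t ∈ S, x t * y t = 0) :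
    ∑ t ∈ S with binaryTrace K z (y t) = 1, x t = 0 := by
  have htr := congrArg (binaryTrace K z) h
  rw [map_sum, map_zero] at htr
  rw [sum_filter]
  refine Eq.trans (sum_congr rfl fun t _ => ?_) htr
  rw [binaryTrace_mul_of_sq_eq_self (hx t)]
  rcases binaryTrace_eq_zero_or_one (hy t) with ht | ht <;> simp [ht]

variable {γ : K}

noncomputable def traceOneIndices (z : ℕ) (γ ζ : K) : Finset (Fin (2 ^ z - 1)) :=
  {t | binaryTrace K z (ζ * γ ^ (t : ℕ)) = 1}

theorem mem_traceOneIndices {ζ : K} {t : Fin (2 ^ z - 1)} :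
    t ∈ traceOneIndices z γ ζ ↔ binaryTrace K z (ζ * γ ^ (t : ℕ)) = 1 := by
  simp [traceOneIndices]

theorem card_traceOneIndices (hz : z ≠ 0) (hγ : IsPrimitiveRoot γ (2 ^ z - 1)) {ζ : K}
    (hζ0 : ζ ≠ 0) (hζ : ζ ^ 2 ^ z = ζ) : #(traceOneIndices z γ ζ) = 2 ^ (z - 1) := by
  have hs : 2 ^ z - 1 ≠ 0 := by have := Nat.one_lt_two_pow hz; omega
  let g : Fin (2 ^ z - 1) ↪ K :=
    ⟨fun t => ζ * γ ^ (t : ℕ), fun t t' h =>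
      Fin.ext (hγ.pow_inj t.2 t'.2 (mul_left_cancel₀ hζ0 h))⟩
  have hg (t) : g t = ζ * γ ^ (t : ℕ) := rfl
  set Q := traceOneIndices z γ ζ
  have hg0 : (0 : K) ∉ Qᶜ.map g := by
    simp [hg, hζ0, hγ.ne_zero hs]
  have hQ : #(Q.map g) ≤ 2 ^ (z - 1) :=
    card_le_of_binaryTrace_eq hz 1 (by simp [hg, Q, mem_traceOneIndices])
  have hQc : #(insert 0 (Qᶜ.map g)) ≤ 2 ^ (z - 1) := by
    refine card_le_of_binaryTrace_eq hz 0 fun x hx => ?_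
    obtain rfl | ⟨t, ht, rfl⟩ := by simpa using hx
    · exact map_zero _
    · exact (binaryTrace_eq_zero_or_one (mul_pow_pow_two_pow hγ.pow_eq_one hζ t)).resolve_right
        (mem_traceOneIndices.not.1 ht)
  rw [card_map] at hQ
  rw [card_insert_of_notMem hg0, card_map] at hQc
  have hcard := card_add_card_compl Q
  rw [Fintype.card_fin] at hcard
  have h2z : 2 ^ z = 2 * 2 ^ (z - 1) := by rw [← pow_succ', Nat.sub_add_cancel (by omega)]
  omega

theorem traceOneIndices_injOn (hz : z ≠ 0) (hγ : IsPrimitiveRoot γ (2 ^ z - 1)) :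
    Set.InjOn (traceOneIndices z γ) {ζ | ζ ^ 2 ^ z = ζ} := by
  intro ζ hζ ζ' hζ' h
  by_contra hne
  have hsum0 : ζ + ζ' ≠ 0 := fun h0 => hne (CharTwo.add_eq_zero.1 h0)
  have hsum : (ζ + ζ') ^ 2 ^ z = ζ + ζ' := by rw [add_pow_char_pow, hζ, hζ']
  obtain ⟨t, ht⟩ : (traceOneIndices z γ (ζ + ζ')).Nonempty := by
    rw [← card_pos, card_traceOneIndices hz hγ hsum0 hsum]
    positivity
  have hiff : t ∈ traceOneIndices z γ ζ ↔ t ∈ traceOneIndices z γ ζ' := by rw [h]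
  have heq : binaryTrace K z (ζ * γ ^ (t : ℕ)) = binaryTrace K z (ζ' * γ ^ (t : ℕ)) := by
    rw [mem_traceOneIndices, mem_traceOneIndices] at hiff
    rcases binaryTrace_eq_zero_or_one (mul_pow_pow_two_pow hγ.pow_eq_one hζ t) with h1 | h1 <;>
    rcases binaryTrace_eq_zero_or_one (mul_pow_pow_two_pow hγ.pow_eq_one hζ' t) with h2 | h2 <;>
    simp_all
  rw [mem_traceOneIndices, add_mul, map_add, heq, CharTwo.add_self_eq_zero] at ht
  exact zero_ne_one ht

end TraceOverSubfield

theorem sum_mul_pow_eq_pow_mul_sum_add_left {R : Type*} [CommSemiring R] {n : ℕ} [NeZero n]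
    {β : R} (hβ : β ^ n = 1) (c : Fin n → R) (i : Fin n) :
    ∑ j, c j * β ^ (j : ℕ) = β ^ (i : ℕ) * ∑ j, c (i + j) * β ^ (j : ℕ) := by
  rw [mul_sum, ← Equiv.sum_comp (Equiv.addLeft i)]
  refine sum_congr rfl fun j _ => ?_
  rw [Equiv.coe_addLeft, Fin.val_add, ← pow_eq_pow_mod _ hβ, pow_add]
  ring

theorem geom_sum_pow_eq_ite {K : Type*} [Field K] {δ : K} {e : ℕ} (hδ : IsPrimitiveRoot δ e)
    (j : ℕ) : ∑ k ∈ range e, (δ ^ j) ^ k = if e ∣ j then (e : K) else 0 := by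
  split_ifs with hj
  · simp [(hδ.pow_eq_one_iff_dvd j).2 hj]
  · rw [geom_sum_eq (mt (hδ.pow_eq_one_iff_dvd j).1 hj), ← pow_mul, mul_comm, pow_mul,
      hδ.pow_eq_one, one_pow, sub_self, zero_div]

theorem pos_right_of_neZero_mul (s e : ℕ) [NeZero (s * e)] : 0 < e :=
  Nat.pos_of_mul_pos_left (Nat.pos_of_neZero (s * e))

section Stride

variable {s e : ℕ} [NeZero (s * e)]

def stride : Fin s ↪ Fin (s * e) where
  toFun t := ⟨t * e, (Nat.mul_lt_mul_right (pos_right_of_neZero_mul s e)).2 t.2⟩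
  inj' _ _ h :=
    Fin.ext (Nat.eq_of_mul_eq_mul_right (pos_right_of_neZero_mul s e) (Fin.mk.inj_iff.1 h))

@[simp]
theorem stride_val (t : Fin s) : ((stride t : Fin (s * e)) : ℕ) = t * e := rfl

theorem sum_filter_dvd_eq_sum_stride {M : Type*} [AddCommMonoid M] (f : Fin (s * e) → M) :
    ∑ j with e ∣ j.val, f j = ∑ t : Fin s, f (stride t) := by
  rw [← sum_map univ stride f]
  congr 1
  ext j
  simp only [mem_filter, mem_univ, true_and, mem_map]
  constructor
  · intro hj
    exact ⟨⟨j / e, (Nat.div_lt_iff_lt_mul (pos_right_of_neZero_mul s e)).2 j.2⟩,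
      Fin.ext (Nat.div_mul_cancel hj)⟩
  · rintro ⟨t, rfl⟩
    exact Dvd.intro_left _ rfl


theorem sum_stride_mul_pow_eq_zero {K : Type*} [Field K] {α : K} (hα : IsPrimitiveRoot α (s * e))
    {c : Fin (s * e) → K} (hc : ∀ k < e, ∑ j, c j * (α ^ (1 + k * s)) ^ (j : ℕ) = 0) :
    ∑ t : Fin s, c (stride t) * (α ^ e) ^ (t : ℕ) = 0 := by
  have hδ : IsPrimitiveRoot (α ^ s) e := hα.pow (Nat.pos_of_neZero _) rfl
  have he : (e : K) ≠ 0 := by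
    have hse := hα.neZero'.out
    rw [Nat.cast_mul] at hse
    exact right_ne_zero_of_mul hse
  have key : ∑ k ∈ range e, ∑ j, c j * (α ^ (1 + k * s)) ^ (j : ℕ) =
      e * ∑ t : Fin s, c (stride t) * (α ^ e) ^ (t : ℕ) :=
    calc _ = ∑ j, c j * α ^ (j : ℕ) * ∑ k ∈ range e, ((α ^ s) ^ (j : ℕ)) ^ k := by
          rw [sum_comm]
          refine sum_congr rfl fun j _ => ?_
          rw [mul_sum]
          refine sum_congr rfl fun k _ => ?_
          ring
      _ = ∑ j with e ∣ j.val, e * (c j * α ^ (j : ℕ)) := by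
          simp only [geom_sum_pow_eq_ite hδ, mul_ite, mul_zero, sum_filter, mul_comm]
      _ = _ := by
          rw [sum_filter_dvd_eq_sum_stride, mul_sum]
          simp only [stride_val, mul_comm, pow_mul]
  exact (mul_eq_zero.1 (key ▸ sum_eq_zero fun k hk => hc k (mem_range.1 hk))).resolve_left he

theorem sum_add_stride_mul_pow_eq_zero {K : Type*} [Field K] {α : K}
    (hα : IsPrimitiveRoot α (s * e)) {c : Fin (s * e) → K}
    (hc : ∀ k < e, ∑ j, c j * (α ^ (1 + k * s)) ^ (j : ℕ) = 0) (i : Fin (s * e)) :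
    ∑ t : Fin s, c (i + stride t) * (α ^ e) ^ (t : ℕ) = 0 := by
  refine sum_stride_mul_pow_eq_zero hα (c := fun j => c (i + j)) fun k hk => ?_
  have hβ : (α ^ (1 + k * s)) ^ (s * e) = 1 := by
    rw [← pow_mul, mul_comm, pow_mul, hα.pow_eq_one, one_pow]
  have := hc k hk
  rw [sum_mul_pow_eq_pow_mul_sum_add_left hβ c i] at this
  exact (mul_eq_zero.1 this).resolve_left
    (pow_ne_zero _ (pow_ne_zero _ (hα.ne_zero (NeZero.ne _))))

end Stride

theorem isRecoverySet_of_add_sum_eq_zero {n : ℕ} {F : Type*} [Field F]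
    {C : Submodule F (Fin n → F)} {i : Fin n} {A : Finset (Fin n)} (hi : i ∉ A)
    (h : ∀ c ∈ C, c i + ∑ j ∈ A, c j = 0) : IsRecoverySet C i A :=
  ⟨hi, fun v => -∑ j, v j, fun c hc => by
    beta_reduce
    rw [sum_coe_sort A c]
    exact eq_neg_of_add_eq_zero_left (h c hc)⟩

section RecoverySets

open scoped Classical

variable {K : Type*} [Field K] [CharP K 2] {z e : ℕ} [NeZero ((2 ^ z - 1) * e)]

noncomputable def recoverySet (γ ζ : K) (i : Fin ((2 ^ z - 1) * e)) :
    Finset (Fin ((2 ^ z - 1) * e)) :=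
  ((traceOneIndices z γ ζ).map (stride.trans (addLeftEmbedding i))).erase i

theorem self_mem_map_traceOneIndices {γ ζ : K} (hζ : binaryTrace K z ζ = 1)
    (i : Fin ((2 ^ z - 1) * e)) :
    i ∈ (traceOneIndices z γ ζ).map (stride.trans (addLeftEmbedding i)) := by
  have hs : 0 < 2 ^ z - 1 := Nat.pos_of_mul_pos_right (Nat.pos_of_neZero ((2 ^ z - 1) * e))
  refine mem_map.2 ⟨⟨0, hs⟩, mem_traceOneIndices.2 (by simpa using hζ), ?_⟩
  simp [Fin.ext_iff]

variable {γ ζ : K}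

theorem card_recoverySet (hz : z ≠ 0) (hγ : IsPrimitiveRoot γ (2 ^ z - 1))
    (hζ : ζ ^ 2 ^ z = ζ) (hTr : binaryTrace K z ζ = 1) (i : Fin ((2 ^ z - 1) * e)) :
    #(recoverySet γ ζ i) = 2 ^ (z - 1) - 1 := by
  have hζ0 : ζ ≠ 0 := by
    rintro rfl
    simp at hTr
  rw [recoverySet, card_erase_of_mem (self_mem_map_traceOneIndices hTr i), card_map,
    card_traceOneIndices hz hγ hζ0 hζ]

theorem recoverySet_injOn (hz : z ≠ 0) (hγ : IsPrimitiveRoot γ (2 ^ z - 1))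
    (i : Fin ((2 ^ z - 1) * e)) :
    Set.InjOn (recoverySet γ · i) {ζ | ζ ^ 2 ^ z = ζ ∧ binaryTrace K z ζ = 1} := by
  rintro ζ ⟨hζ, hTr⟩ ζ' ⟨hζ', hTr'⟩ h
  have hmap := congrArg (insert i) h
  simp only [recoverySet] at hmap
  rw [insert_erase (self_mem_map_traceOneIndices hTr i),
    insert_erase (self_mem_map_traceOneIndices hTr' i)] at hmap
  exact traceOneIndices_injOn hz hγ hζ hζ' (map_injective _ hmap)

theorem isRecoverySet_recoverySet [Algebra (ZMod 2) K]
    {D : Submodule (ZMod 2) (Fin ((2 ^ z - 1) * e) → ZMod 2)}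
    (hγ : IsPrimitiveRoot γ (2 ^ z - 1)) {i : Fin ((2 ^ z - 1) * e)}
    (hD : ∀ c ∈ D, ∑ t : Fin (2 ^ z - 1),
      algebraMap (ZMod 2) K (c (i + stride t)) * γ ^ (t : ℕ) = 0)
    (hζ : ζ ^ 2 ^ z = ζ) (hTr : binaryTrace K z ζ = 1) :
    IsRecoverySet D i (recoverySet γ ζ i) := by
  refine isRecoverySet_of_add_sum_eq_zero (notMem_erase i _) fun c hc => ?_
  rw [recoverySet, add_sum_erase _ _ (self_mem_map_traceOneIndices hTr i), sum_map]
  apply (algebraMap (ZMod 2) K).injective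
  rw [map_sum, map_zero]
  refine sum_filter_binaryTrace_eq_one_eq_zero univ (fun t => by rw [← map_pow, ZMod.pow_card])
    (fun t => mul_pow_pow_two_pow hγ.pow_eq_one hζ t) ?_
  simp_rw [mul_left_comm _ ζ, ← mul_sum, Function.Embedding.trans_apply, addLeftEmbedding_apply]
  rw [hD c hc, mul_zero]

theorem exists_recoverySets [Algebra (ZMod 2) K]
    {D : Submodule (ZMod 2) (Fin ((2 ^ z - 1) * e) → ZMod 2)} (hz : z ≠ 0)
    (hγ : IsPrimitiveRoot γ (2 ^ z - 1)) {i : Fin ((2 ^ z - 1) * e)}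
    (hD : ∀ c ∈ D, ∑ t : Fin (2 ^ z - 1),
      algebraMap (ZMod 2) K (c (i + stride t)) * γ ^ (t : ℕ) = 0) :
    ∃ 𝒜 : Finset (Finset (Fin ((2 ^ z - 1) * e))), 2 ^ (z - 1) ≤ #𝒜 ∧
      ∀ A ∈ 𝒜, IsRecoverySet D i A ∧ #A = 2 ^ (z - 1) - 1 := by
  have hfix (u : Fin (2 ^ z - 1)) : (γ ^ (u : ℕ)) ^ 2 ^ z = γ ^ (u : ℕ) := by
    simpa using mul_pow_pow_two_pow hγ.pow_eq_one (one_pow _) u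
  have hTr {u} (hu : u ∈ traceOneIndices z γ 1) : binaryTrace K z (γ ^ (u : ℕ)) = 1 := by
    simpa using mem_traceOneIndices.1 hu
  refine ⟨(traceOneIndices z γ 1).image fun u : Fin (2 ^ z - 1) => recoverySet γ (γ ^ (u : ℕ)) i,
    ?_, ?_⟩
  · rw [card_image_of_injOn, card_traceOneIndices hz hγ one_ne_zero (one_pow _)]
    intro u hu u' hu' h
    exact Fin.ext (hγ.pow_inj u.2 u'.2
      (recoverySet_injOn hz hγ i ⟨hfix u, hTr hu⟩ ⟨hfix u', hTr hu'⟩ h))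
  · simp only [mem_image]
    rintro _ ⟨u, hu, rfl⟩
    exact ⟨isRecoverySet_recoverySet hγ hD (hfix u) (hTr hu),
      card_recoverySet hz hγ (hfix u) (hTr hu) i⟩

end RecoverySets

theorem stmt4_general {K : Type*} [Field K] [Algebra (ZMod 2) K]
    (n z : ℕ) [NeZero n] (hz : 1 ≤ z) (hzn : (2 ^ z - 1) ∣ n)
    (α : K) (hα : IsPrimitiveRoot α n)
    (D : Submodule (ZMod 2) (Fin n → ZMod 2))
    (hcoset : {β | ∃ j : ℕ, j < n / (2 ^ z - 1) ∧ β = α ^ (1 + j * (2 ^ z - 1))} ⊆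
      definingSetExt n D) :
    HasLocality D (2 ^ (z - 1) - 1) ∧
    ∀ i : Fin n, ∃ 𝒜 : Finset (Finset (Fin n)), 2 ^ (z - 1) ≤ 𝒜.card ∧
      ∀ A ∈ 𝒜, IsRecoverySet D i A ∧ A.card = 2 ^ (z - 1) - 1 := by
  obtain ⟨e, rfl⟩ := hzn
  have : CharP K 2 := charP_of_injective_algebraMap (algebraMap (ZMod 2) K).injective 2
  have hs : 0 < 2 ^ z - 1 := Nat.pos_of_mul_pos_right (Nat.pos_of_neZero ((2 ^ z - 1) * e))
  have hzeros (c) (hc : c ∈ D) (k) (hk : k < e) :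
      ∑ j, algebraMap (ZMod 2) K (c j) * (α ^ (1 + k * (2 ^ z - 1))) ^ (j : ℕ) = 0 :=
    (hcoset ⟨k, by rwa [Nat.mul_div_cancel_left _ hs], rfl⟩).2 c hc
  have hγ : IsPrimitiveRoot (α ^ e) (2 ^ z - 1) := hα.pow (Nat.pos_of_neZero _) (mul_comm _ _)
  have hrec (i) := exists_recoverySets (D := D) (by omega) hγ
    fun c hc => sum_add_stride_mul_pow_eq_zero hα (hzeros c hc) i
  refine ⟨fun i => ?_, hrec⟩
  obtain ⟨𝒜, h𝒜, hA⟩ := hrec i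
  obtain ⟨A, hA𝒜⟩ := card_pos.1 (h𝒜.trans_lt' (by positivity))
  exact ⟨A, (hA A hA𝒜).2.le, (hA A hA𝒜).1⟩

/-- a binary cyclic code whose complete defining set contains the coset
`α·G_{2^z−1}` has locality at most `2^{z−1} − 1`, and every coordinate has at least `2^{z−1}`
recovery sets of size `2^{z−1} − 1`. -/
theorem stmt4 {K : Type*} [Field K] [Fintype K] [Algebra (ZMod 2) K]
    (n z m : ℕ) [NeZero n] (hodd : Odd n) (hz : 1 ≤ z) (hzn : (2 ^ z - 1) ∣ n)
    (hK : Fintype.card K = 2 ^ m)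
    -- `m` is the multiplicative order of 2 modulo n, i.e. `F_{2^m}` is the splitting field
    -- of `x^n − 1` over `F_2`
    (hmord : n ∣ 2 ^ m - 1) (hmmin : ∀ m' : ℕ, 0 < m' → n ∣ 2 ^ m' - 1 → m ≤ m')
    (α : K) (hα : IsPrimitiveRoot α n)
    (D : Submodule (ZMod 2) (Fin n → ZMod 2)) (hcyc : IsCyclicCode D)
    (hcoset : {β | ∃ j : ℕ, j < n / (2 ^ z - 1) ∧ β = α ^ (1 + j * (2 ^ z - 1))} ⊆
      definingSetExt n D) :
    HasLocality D (2 ^ (z - 1) - 1) ∧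
    ∀ i : Fin n, ∃ 𝒜 : Finset (Finset (Fin n)), 2 ^ (z - 1) ≤ 𝒜.card ∧
      ∀ A ∈ 𝒜, IsRecoverySet D i A ∧ A.card = 2 ^ (z - 1) - 1 :=
  stmt4_general n z hz hzn α hα D hcoset

end LRC
end

section
/- Let q be a prime power, s a positive integer coprime to q, m = ord_s(q) the multiplicative order of q modulo s, and β ∈ F_{q^m} a primitive s-th root of unity. Then there exists γ ∈ F_{q^m} \ {0} such that the number of indices i ∈ {0, 1, …, s−1} with Tr_{F_{q^m}/F_q}(γβ^i) = 0 is at least s·(q^{m−1}−1)/(q^m−1). Consequently, the irreducible cyclic code V = {(Tr_{F_{q^m}/F_q}(γ), Tr_{F_{q^m}/F_q}(γβ), …, Tr_{F_{q^m}/F_q}(γβ^{s−1})) : γ ∈ F_{q^m}} ⊆ F_q^s has minimum distance d ≤ s·(1 − (q^{m−1}−1)/(q^m−1)). -/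
/-!
For `x ≠ 0` the hyperplane `{γ | Tr(γ x) = 0}` has `q ^ (m - 1)` points, so summing over the
`s` coordinates `x = β ^ i`, the nonzero `γ` have `s (q ^ (m - 1) - 1)` zero coordinates in total
and one of them has at least the average number. Its codeword is nonzero: `m = ord_s(q)` forces
`F(β) = L`, and the trace form of `L / F` is nondegenerate. Its weight bounds the minimum distance.
-/

open scoped BigOperators

namespace LRC

lemma hwt_eq_sub_card {n : ℕ} {F : Type*} [Zero F] (c : Fin n → F) :
    hwt c = n - Nat.card {i : Fin n // c i = 0} := by
  classical
  rw [hwt, Nat.card_eq_fintype_card, Nat.card_eq_fintype_card, Fintype.card_subtype_compl,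
    Fintype.card_fin]

section Separable

open IntermediateField

variable {K L : Type*} [Field K] [Field L] [Algebra K L] [FiniteDimensional K L]
  [Algebra.IsSeparable K L]

lemma eq_zero_of_forall_trace_mul_pow_eq_zero {β γ : L} (hβ : K⟮β⟯ = ⊤)
    (h : ∀ n : ℕ, Algebra.trace K L (γ * β ^ n) = 0) : γ = 0 := by
  rw [adjoin_simple_eq_top_iff_of_isAlgebraic (IsAlgebraic.of_finite K β)] at hβ
  have hspan : Submodule.span K (Submonoid.powers β : Set L) ≤
      LinearMap.ker (Algebra.traceForm K L γ) :=
    Submodule.span_le.2 (by rintro _ ⟨n, rfl⟩; exact h n)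
  rw [Submonoid.powers_eq_closure, ← Algebra.adjoin_eq_span, hβ, Algebra.top_toSubmodule,
    top_le_iff, LinearMap.ker_eq_top] at hspan
  exact (traceForm_nondegenerate K L).1 γ fun x => by simp [hspan]

lemma exists_trace_mul_pow_ne_zero {s : ℕ} (hs : 0 < s) {β γ : L} (hβs : β ^ s = 1)
    (hβ : K⟮β⟯ = ⊤) (hγ : γ ≠ 0) : ∃ i : Fin s, Algebra.trace K L (γ * β ^ (i : ℕ)) ≠ 0 := by
  by_contra! h
  refine hγ (eq_zero_of_forall_trace_mul_pow_eq_zero hβ fun n => ?_)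
  rw [← Nat.mod_add_div n s, pow_add, pow_mul, hβs, one_pow, mul_one]
  exact h ⟨n % s, Nat.mod_lt n hs⟩

end Separable

section FiniteField

open Finset

variable {F L : Type*} [Field F] [Fintype F] [Field L] [Fintype L] [Algebra F L]

lemma natCard_ker_trace :
    Nat.card (LinearMap.ker (Algebra.trace F L)) = Fintype.card F ^ (Module.finrank F L - 1) := by
  classical
  have hrank := LinearMap.finrank_range_add_finrank_ker (Algebra.trace F L)
  rw [LinearMap.range_eq_top.2 (Algebra.trace_surjective F L), finrank_top,
    Module.finrank_self] at hrank
  rw [Nat.card_eq_fintype_card, Module.card_eq_pow_finrank (K := F)]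
  congr 1
  omega

lemma card_trace_mul_eq_zero [DecidableEq F] [DecidableEq L] {x : L} (hx : x ≠ 0) :
    #{γ ∈ univ.erase 0 | Algebra.trace F L (γ * x) = 0} =
      Fintype.card F ^ (Module.finrank F L - 1) - 1 := by
  have hall : #{γ : L | Algebra.trace F L (γ * x) = 0} =
      Fintype.card F ^ (Module.finrank F L - 1) := by
    rw [← natCard_ker_trace, ← Fintype.card_subtype, ← Nat.card_eq_fintype_card]
    exact Nat.card_congr ((Equiv.mulRight₀ x hx).subtypeEquiv fun _ => Iff.rfl)
  rw [filter_erase, card_erase_of_mem (by simp), hall]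

lemma sum_card_trace_mul_pow_eq_zero [DecidableEq F] [DecidableEq L] {s : ℕ} {β : L}
    (hβ : β ≠ 0) :
    ∑ γ ∈ univ.erase 0, #{i : Fin s | Algebra.trace F L (γ * β ^ (i : ℕ)) = 0} =
      s * (Fintype.card F ^ (Module.finrank F L - 1) - 1) := by
  simp_rw [card_filter]
  rw [sum_comm]
  simp_rw [← card_filter, card_trace_mul_eq_zero (pow_ne_zero _ hβ), sum_const, card_univ,
    Fintype.card_fin, smul_eq_mul]

lemma exists_ne_zero_average_le_card_trace_mul_pow_eq_zero {s : ℕ} {β : L} (hβ : β ≠ 0) :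
    ∃ γ : L, γ ≠ 0 ∧
      (s : ℝ) * ((Fintype.card F : ℝ) ^ (Module.finrank F L - 1) - 1) /
          ((Fintype.card F : ℝ) ^ Module.finrank F L - 1) ≤
        Nat.card {i : Fin s // Algebra.trace F L (γ * β ^ (i : ℕ)) = 0} := by
  classical
  set q := Fintype.card F
  set m := Module.finrank F L
  set average : ℝ := s * ((q : ℝ) ^ (m - 1) - 1) / ((q : ℝ) ^ m - 1)
  have hden : (0 : ℝ) < (q : ℝ) ^ m - 1 := by
    have : (1 : ℝ) < (q : ℝ) ^ m :=
      one_lt_pow₀ (by exact_mod_cast Fintype.one_lt_card) Module.finrank_pos.ne'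
    linarith
  have hcard : (#(univ.erase (0 : L)) : ℝ) = (q : ℝ) ^ m - 1 := by
    rw [card_erase_of_mem (mem_univ _), card_univ, Module.card_eq_pow_finrank (K := F),
      Nat.cast_sub (Nat.one_le_pow _ _ Fintype.card_pos), Nat.cast_pow, Nat.cast_one]
  have hsum := congrArg (Nat.cast (R := ℝ)) (sum_card_trace_mul_pow_eq_zero (F := F) (s := s) hβ)
  push_cast [Nat.cast_sub (Nat.one_le_pow _ _ Fintype.card_pos)] at hsum
  have hsum_eq : ∑ _γ ∈ univ.erase (0 : L), average =
      ∑ γ ∈ univ.erase 0, (#{i : Fin s | Algebra.trace F L (γ * β ^ (i : ℕ)) = 0} : ℝ) := by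
    rw [sum_const, nsmul_eq_mul, hcard, mul_div_cancel₀ _ hden.ne', hsum]
  obtain ⟨γ, hγ, hle⟩ := exists_le_of_sum_le ⟨1, by simp⟩ hsum_eq.le
  refine ⟨γ, ne_of_mem_erase hγ, ?_⟩
  rwa [Nat.card_eq_fintype_card, Fintype.card_subtype]

open IntermediateField in
lemma adjoin_simple_eq_top_of_orderOf {β : L} (hβ : β ≠ 0)
    (hmin : ∀ k : ℕ, 0 < k → orderOf β ∣ Fintype.card F ^ k - 1 → Module.finrank F L ≤ k) :
    F⟮β⟯ = ⊤ := by
  let _ := Fintype.ofFinite F⟮β⟯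
  have hdvd : orderOf β ∣ Fintype.card F ^ Module.finrank F F⟮β⟯ - 1 := by
    rw [← Module.card_eq_pow_finrank]
    refine orderOf_dvd_of_pow_eq_one ?_
    have := FiniteField.pow_card_sub_one_eq_one (⟨β, mem_adjoin_simple_self F β⟩ : F⟮β⟯)
      (ne_of_apply_ne Subtype.val hβ)
    simpa using congrArg Subtype.val this
  refine eq_of_le_of_finrank_le le_top ?_
  rw [finrank_top']
  exact hmin _ Module.finrank_pos hdvd

end FiniteField

theorem stmt6_general {F L : Type*} [Field F] [Fintype F] [Field L] [Fintype L] [Algebra F L]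
    (q s m : ℕ) (hq : Fintype.card F = q) (hs : 0 < s)
    (hm : Module.finrank F L = m)
    -- `m = ord_s(q)`: the multiplicative order of `q` modulo `s`
    (hm2 : ∀ k : ℕ, 0 < k → s ∣ q ^ k - 1 → m ≤ k)
    (β : L) (hβ : orderOf β = s) :
    (∃ γ : L, γ ≠ 0 ∧
        ((s : ℝ) * ((q : ℝ) ^ (m - 1) - 1) / ((q : ℝ) ^ m - 1) ≤
          (Nat.card {i : Fin s // Algebra.trace F L (γ * β ^ (i : ℕ)) = 0} : ℝ))) ∧
      ((sInf {w | ∃ v ∈ Set.range (fun γ : L => fun i : Fin s =>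
            Algebra.trace F L (γ * β ^ (i : ℕ))), v ≠ 0 ∧ hwt v = w} : ℝ) ≤
        (s : ℝ) * (1 - ((q : ℝ) ^ (m - 1) - 1) / ((q : ℝ) ^ m - 1))) := by
  subst hq hm
  have hβs : β ^ s = 1 := hβ ▸ pow_orderOf_eq_one β
  have hβ0 : β ≠ 0 := ne_zero_pow hs.ne' (by rw [hβs]; exact one_ne_zero)
  have htop := adjoin_simple_eq_top_of_orderOf (F := F) hβ0 (hβ ▸ hm2)
  obtain ⟨γ, hγ, hzeros⟩ :=
    exists_ne_zero_average_le_card_trace_mul_pow_eq_zero (F := F) (s := s) hβ0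
  refine ⟨⟨γ, hγ, hzeros⟩, ?_⟩
  obtain ⟨i, hi⟩ := exists_trace_mul_pow_ne_zero hs hβs htop hγ
  have hv : (fun i : Fin s => Algebra.trace F L (γ * β ^ (i : ℕ))) ≠ 0 :=
    fun h => hi (congrFun h i)
  have hzeros_le : Nat.card {i : Fin s // Algebra.trace F L (γ * β ^ (i : ℕ)) = 0} ≤ s :=
    (Finite.card_subtype_le _).trans_eq (Nat.card_fin s)
  refine csInf_le_of_le (b := (hwt fun i : Fin s => Algebra.trace F L (γ * β ^ (i : ℕ)) : ℝ))
    ⟨0, ?_⟩ ⟨_, ⟨γ, rfl⟩, hv, rfl⟩ ?_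
  · rintro _ ⟨_, _, _, rfl⟩
    positivity
  rw [hwt_eq_sub_card, Nat.cast_sub hzeros_le, mul_sub, mul_one, ← mul_div_assoc]
  linarith

/-- averaging bound on the minimum distance of an irreducible cyclic code. -/
theorem stmt6 {F L : Type*} [Field F] [Fintype F] [Field L] [Fintype L] [Algebra F L]
    (q s m : ℕ) (hq : Fintype.card F = q) (hs : 0 < s) (hsq : Nat.Coprime s q)
    (hm : Module.finrank F L = m)
    -- `m = ord_s(q)`: the multiplicative order of `q` modulo `s`
    (hm1 : s ∣ q ^ m - 1) (hm2 : ∀ k : ℕ, 0 < k → s ∣ q ^ k - 1 → m ≤ k)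
    (β : L) (hβ : orderOf β = s) :
    (∃ γ : L, γ ≠ 0 ∧
        ((s : ℝ) * ((q : ℝ) ^ (m - 1) - 1) / ((q : ℝ) ^ m - 1) ≤
          (Nat.card {i : Fin s // Algebra.trace F L (γ * β ^ (i : ℕ)) = 0} : ℝ))) ∧
      ((sInf {w | ∃ v ∈ Set.range (fun γ : L => fun i : Fin s =>
            Algebra.trace F L (γ * β ^ (i : ℕ))), v ≠ 0 ∧ hwt v = w} : ℝ) ≤
        (s : ℝ) * (1 - ((q : ℝ) ^ (m - 1) - 1) / ((q : ℝ) ^ m - 1))) :=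
  stmt6_general q s m hq hs hm hm2 β hβ

end LRC
end

section
/- Let F be a field of characteristic 2 containing a primitive n-th root of unity α, where n is odd. Let p_1, p_2 be positive divisors of n and l_1, l_2 integers, and define the polynomial f(x) = f_1(x) + f_2(x), where f_1(x) = Σ_{j=0}^{p_1−1} (α^{l_1} x)^{j n/p_1} and f_2(x) = Σ_{i=0}^{p_2−1} (α^{l_2} x)^{i n/p_2}. Then: (i) for every n-th root of unity γ ∈ F, f(γ) = 0 if and only if γ belongs to an even number (i.e., to both or to neither) of the cosets α^{−l_1}G_{p_1} and α^{−l_2}G_{p_2}; (ii) the number of nonzero coefficients of f is at most p_1 + p_2 − 2·gcd(p_1, p_2, l_1 − l_2). -/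
open scoped BigOperators

namespace LRC

open Polynomial

private lemma odd_cast_eq_one {F : Type*} [Field F] [CharP F 2] {p : ℕ} (hp : Odd p) :
    (p : F) = 1 := by
  obtain ⟨k, hk⟩ := hp
  subst hk
  have h2 : (2 : F) = 0 := by exact_mod_cast CharP.cast_eq_zero F 2
  push_cast
  rw [h2]; ring

open scoped Classical in
private lemma geom_eval {F : Type*} [Field F] [CharP F 2] {β : F} {p : ℕ} (hp : Odd p)
    (hβ : β ^ p = 1) :
    (∑ j ∈ Finset.range p, β ^ j) = if β = 1 then 1 else 0 := by
  split_ifs with h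
  · simp [h, odd_cast_eq_one hp]
  · rw [geom_sum_eq h, hβ]
    simp

private lemma zpow_eq_zpow_iff {F : Type*} [Field F] {n : ℕ} (hn0 : 0 < n)
    {α : F} (hα : IsPrimitiveRoot α n) (a b : ℤ) :
    α ^ a = α ^ b ↔ (n : ℤ) ∣ a - b := by
  have h0 : α ≠ 0 := hα.ne_zero hn0.ne'
  rw [← hα.zpow_eq_one_iff_dvd, zpow_sub₀ h0,
    div_eq_one_iff_eq (zpow_ne_zero _ h0)]

private lemma mem_coset_iff {F : Type*} [Field F] (n : ℕ) (hn0 : 0 < n)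
    (α : F) (hα : IsPrimitiveRoot α n)
    (p : ℕ) (hp : 0 < p) (hpn : p ∣ n) (l : ℤ) (γ : F) (hγ : γ ^ n = 1) :
    (α ^ l * γ) ^ (n / p) = 1 ↔ ∃ j : ℕ, j < n / p ∧ γ = α ^ (-l + (j : ℤ) * p) := by
  have : NeZero n := ⟨hn0.ne'⟩
  have h0 : α ≠ 0 := hα.ne_zero hn0.ne'
  set q : ℕ := n / p with hq
  have hq0 : 0 < q := Nat.div_pos (Nat.le_of_dvd hn0 hpn) hp
  have hnpq : (n : ℤ) = (p : ℤ) * q := by exact_mod_cast (Nat.mul_div_cancel' hpn).symm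
  obtain ⟨k, hk, rfl⟩ := hα.eq_pow_of_pow_eq_one hγ
  have hLHS : (α ^ l * α ^ k) ^ q = α ^ ((l + (k:ℤ)) * q) := by
    rw [← zpow_natCast α k, ← zpow_add₀ h0, ← zpow_natCast _ q, ← zpow_mul]
  rw [hLHS, hα.zpow_eq_one_iff_dvd]
  have hiff : ∀ j : ℕ, (α ^ (k:ℕ) = α ^ (-l + (j:ℤ) * p)) ↔ (n:ℤ) ∣ (l + k) - j * p := by
    intro j
    rw [← zpow_natCast α k, zpow_eq_zpow_iff hn0 hα]
    constructor <;> intro h <;> [skip; skip] <;>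
      · obtain ⟨t, ht⟩ := h; exact ⟨t, by linarith⟩
  constructor
  · intro hd
    have hdp : (p : ℤ) ∣ l + k := by
      have : (p:ℤ) * q ∣ ((l + k)) * q := by rwa [hnpq] at hd
      exact (mul_dvd_mul_iff_right (by exact_mod_cast hq0.ne' : (q : ℤ) ≠ 0)).mp this
    obtain ⟨m, hm⟩ := hdp
    have hq0' : (0:ℤ) < q := by exact_mod_cast hq0
    refine ⟨(m % q).toNat, ?_, ?_⟩
    · have h1 : 0 ≤ m % q := Int.emod_nonneg m hq0'.ne'
      have h2 : m % q < q := Int.emod_lt_of_pos m hq0'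
      omega
    · have h1 : 0 ≤ m % q := Int.emod_nonneg m hq0'.ne'
      rw [hiff]
      have hcast : (((m % q).toNat : ℤ)) = m % q := Int.toNat_of_nonneg h1
      rw [hcast, hm, Int.emod_def]
      exact ⟨m / q, by rw [hnpq]; ring⟩
  · rintro ⟨j, hj, hγj⟩
    have hd := (hiff j).mp hγj
    obtain ⟨t, ht⟩ := hd
    have : (l + (k:ℤ)) * q = n * (t * q + j) := by
      have : (l + (k:ℤ)) = n * t + j * p := by linarith
      rw [this, hnpq]; ring
    exact ⟨t * q + j, this⟩


open scoped Classical in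
private lemma coeff_sum_part {F : Type*} [Field F] (α : F) (l : ℤ)
    (p q : ℕ) (hq : 0 < q) (e : ℕ) :
    (∑ j ∈ Finset.range p, (C (α ^ l) * X) ^ (j * q)).coeff e
      = if q ∣ e ∧ e < p * q then α ^ (l * e) else 0 := by
  rw [finset_sum_coeff]
  have hterm : ∀ j, ((C (α ^ l) * X) ^ (j * q)).coeff e
      = if e = j * q then α ^ (l * (e:ℕ)) else 0 := by
    intro j
    rw [mul_pow, ← C_pow, coeff_C_mul, coeff_X_pow]
    split_ifs with h
    · subst h; rw [mul_one, ← zpow_natCast, ← zpow_mul, mul_comm]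
    · rw [mul_zero]
  simp_rw [hterm]
  split_ifs with h
  · obtain ⟨hdvd, hlt⟩ := h
    rw [Finset.sum_eq_single (e / q)]
    · rw [if_pos (Nat.div_mul_cancel hdvd).symm]
    · intro j _ hne
      rw [if_neg]
      intro heq
      exact hne (by rw [heq, Nat.mul_div_cancel _ hq])
    · intro hmem
      exact absurd (Finset.mem_range.mpr ((Nat.div_lt_iff_lt_mul hq).mpr hlt)) hmem
  · apply Finset.sum_eq_zero
    intro j hj
    rw [if_neg]
    intro heq
    exact h ⟨heq ▸ dvd_mul_left q j,
      heq ▸ (Nat.mul_lt_mul_right hq).mpr (Finset.mem_range.mp hj)⟩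

private lemma mem_image_mul_iff (p q e : ℕ) (hq : 0 < q) :
    e ∈ (Finset.range p).image (· * q) ↔ q ∣ e ∧ e < p * q := by
  simp only [Finset.mem_image, Finset.mem_range]
  constructor
  · rintro ⟨j, hj, rfl⟩
    exact ⟨dvd_mul_left q j, (Nat.mul_lt_mul_right hq).mpr hj⟩
  · rintro ⟨⟨c, rfl⟩, hlt⟩
    exact ⟨c, by rw [mul_comm] at hlt; exact (Nat.mul_lt_mul_right hq).mp hlt, (mul_comm c q)⟩

/-- properties of the idempotent-like polynomial `f = f₁ + f₂` over a field of
characteristic 2: its roots among the n-th roots of unity are exactly the elements lying in an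
even number of the two cosets, and it has at most `p₁+p₂−2·gcd(p₁,p₂,l₁−l₂)` nonzero
coefficients. -/
theorem stmt10 {F : Type*} [Field F] [CharP F 2]
    (n : ℕ) (hn : Odd n) (hn0 : 0 < n) (α : F) (hα : IsPrimitiveRoot α n)
    (p₁ p₂ : ℕ) (hp₁ : 0 < p₁) (hp₂ : 0 < p₂) (hp₁n : p₁ ∣ n) (hp₂n : p₂ ∣ n)
    (l₁ l₂ : ℤ)
    (f : Polynomial F)
    (hf : f = (∑ j ∈ Finset.range p₁, (Polynomial.C (α ^ l₁) * Polynomial.X) ^ (j * (n / p₁)))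
        + ∑ i ∈ Finset.range p₂, (Polynomial.C (α ^ l₂) * Polynomial.X) ^ (i * (n / p₂))) :
    (∀ γ : F, γ ^ n = 1 →
      (f.eval γ = 0 ↔
        ((γ ∈ {β : F | ∃ j : ℕ, j < n / p₁ ∧ β = α ^ (-l₁ + (j : ℤ) * p₁)}) ↔
         (γ ∈ {β : F | ∃ j : ℕ, j < n / p₂ ∧ β = α ^ (-l₂ + (j : ℤ) * p₂)})))) ∧
    f.support.card ≤ p₁ + p₂ - 2 * Nat.gcd (Nat.gcd p₁ p₂) (l₁ - l₂).natAbs := by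
  classical
  have h0 : α ≠ 0 := hα.ne_zero hn0.ne'
  set q₁ : ℕ := n / p₁ with hq₁def
  set q₂ : ℕ := n / p₂ with hq₂def
  have hq₁0 : 0 < q₁ := Nat.div_pos (Nat.le_of_dvd hn0 hp₁n) hp₁
  have hq₂0 : 0 < q₂ := Nat.div_pos (Nat.le_of_dvd hn0 hp₂n) hp₂
  have hnq₁ : p₁ * q₁ = n := Nat.mul_div_cancel' hp₁n
  have hnq₂ : p₂ * q₂ = n := Nat.mul_div_cancel' hp₂n
  have hpow1 : ∀ (l : ℤ) (γ : F), γ ^ n = 1 → ((α ^ l * γ) ^ q₁) ^ p₁ = 1 := by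
    intro l γ hγ
    rw [← pow_mul, mul_comm q₁ p₁, hnq₁, mul_pow, hγ, mul_one,
      ← zpow_natCast (α ^ l), ← zpow_mul, mul_comm, zpow_mul, zpow_natCast,
      hα.pow_eq_one, one_zpow]
  have hpow2 : ∀ (l : ℤ) (γ : F), γ ^ n = 1 → ((α ^ l * γ) ^ q₂) ^ p₂ = 1 := by
    intro l γ hγ
    rw [← pow_mul, mul_comm q₂ p₂, hnq₂, mul_pow, hγ, mul_one,
      ← zpow_natCast (α ^ l), ← zpow_mul, mul_comm, zpow_mul, zpow_natCast,
      hα.pow_eq_one, one_zpow]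
  constructor
  · intro γ hγ
    have heval : f.eval γ
        = (∑ j ∈ Finset.range p₁, ((α ^ l₁ * γ) ^ q₁) ^ j)
        + (∑ i ∈ Finset.range p₂, ((α ^ l₂ * γ) ^ q₂) ^ i) := by
      rw [hf]
      simp only [eval_add, eval_finset_sum, eval_pow, eval_mul, eval_C, eval_X]
      congr 1 <;> refine Finset.sum_congr rfl fun j _ => ?_ <;>
        rw [mul_comm j, pow_mul]
    rw [heval, geom_eval (hn.of_dvd_nat hp₁n) (hpow1 l₁ γ hγ),
      geom_eval (hn.of_dvd_nat hp₂n) (hpow2 l₂ γ hγ)]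
    have hm1 : (γ ∈ {β : F | ∃ j : ℕ, j < n / p₁ ∧ β = α ^ (-l₁ + (j : ℤ) * p₁)})
        ↔ (α ^ l₁ * γ) ^ q₁ = 1 :=
      (mem_coset_iff n hn0 α hα p₁ hp₁ hp₁n l₁ γ hγ).symm
    have hm2 : (γ ∈ {β : F | ∃ j : ℕ, j < n / p₂ ∧ β = α ^ (-l₂ + (j : ℤ) * p₂)})
        ↔ (α ^ l₂ * γ) ^ q₂ = 1 :=
      (mem_coset_iff n hn0 α hα p₂ hp₂ hp₂n l₂ γ hγ).symm
    rw [hm1, hm2]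
    split_ifs with h1 h2 h2 <;>
      simp [h1, h2, CharTwo.add_self_eq_zero, one_ne_zero]
  · -- support bound
    set g : ℕ := Nat.gcd p₁ p₂ with hgdef
    set d : ℕ := Nat.gcd g (l₁ - l₂).natAbs with hddef
    have hg0 : 0 < g := Nat.gcd_pos_of_pos_left _ hp₁
    have hd0 : 0 < d := Nat.gcd_pos_of_pos_left _ hg0
    have hgp₁ : g ∣ p₁ := Nat.gcd_dvd_left _ _
    have hgp₂ : g ∣ p₂ := Nat.gcd_dvd_right _ _
    have hdg : d ∣ g := Nat.gcd_dvd_left _ _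
    have hgn : g ∣ n := hgp₁.trans hp₁n
    have hng : g * (n / g) = n := Nat.mul_div_cancel' hgn
    have hdg' : d * (g / d) = g := Nat.mul_div_cancel' hdg
    have hdivmul : ∀ p q : ℕ, g ∣ p → (p * q) / g = (p / g) * q := by
      rintro p q ⟨c, rfl⟩
      rw [mul_assoc, Nat.mul_div_cancel_left _ hg0, Nat.mul_div_cancel_left _ hg0]
    have hng1 : n / g = (p₁ / g) * q₁ := by rw [← hnq₁, hdivmul _ _ hgp₁]
    have hng2 : n / g = (p₂ / g) * q₂ := by rw [← hnq₂, hdivmul _ _ hgp₂]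
    have hng0 : 0 < n / g := Nat.div_pos (Nat.le_of_dvd hn0 hgn) hg0
    have hgd0 : 0 < g / d := Nat.div_pos (Nat.le_of_dvd hg0 hdg) hd0
    have hcoeff : ∀ e : ℕ, f.coeff e
        = (if q₁ ∣ e ∧ e < p₁ * q₁ then α ^ (l₁ * e) else 0)
        + (if q₂ ∣ e ∧ e < p₂ * q₂ then α ^ (l₂ * e) else 0) := by
      intro e
      rw [hf, coeff_add, coeff_sum_part α l₁ p₁ q₁ hq₁0 e, coeff_sum_part α l₂ p₂ q₂ hq₂0 e]
    set S₁ := (Finset.range p₁).image (· * q₁) with hS₁def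
    set S₂ := (Finset.range p₂).image (· * q₂) with hS₂def
    set T := (Finset.range g).image (· * (n / g)) with hTdef
    set Z := (Finset.range d).image (· * ((g / d) * (n / g))) with hZdef
    have hTS₁ : T ⊆ S₁ := by
      intro e he
      rw [hTdef, Finset.mem_image] at he
      obtain ⟨t, ht, rfl⟩ := he
      rw [Finset.mem_range] at ht
      rw [hS₁def, Finset.mem_image]
      refine ⟨t * (p₁ / g), Finset.mem_range.mpr ?_, by rw [hng1]; ring⟩
      calc t * (p₁ / g) < g * (p₁ / g) :=
            (Nat.mul_lt_mul_right (Nat.div_pos (Nat.le_of_dvd hp₁ hgp₁) hg0)).mpr ht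
        _ = p₁ := Nat.mul_div_cancel' hgp₁
    have hTS₂ : T ⊆ S₂ := by
      intro e he
      rw [hTdef, Finset.mem_image] at he
      obtain ⟨t, ht, rfl⟩ := he
      rw [Finset.mem_range] at ht
      rw [hS₂def, Finset.mem_image]
      refine ⟨t * (p₂ / g), Finset.mem_range.mpr ?_, by rw [hng2]; ring⟩
      calc t * (p₂ / g) < g * (p₂ / g) :=
            (Nat.mul_lt_mul_right (Nat.div_pos (Nat.le_of_dvd hp₂ hgp₂) hg0)).mpr ht
        _ = p₂ := Nat.mul_div_cancel' hgp₂
    have hZT : Z ⊆ T := by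
      intro e he
      rw [hZdef, Finset.mem_image] at he
      obtain ⟨t, ht, rfl⟩ := he
      rw [Finset.mem_range] at ht
      rw [hTdef, Finset.mem_image]
      refine ⟨t * (g / d), Finset.mem_range.mpr ?_, by ring⟩
      calc t * (g / d) < d * (g / d) := (Nat.mul_lt_mul_right hgd0).mpr ht
        _ = g := hdg'
    have hZzero : ∀ e ∈ Z, f.coeff e = 0 := by
      intro e heZ
      have h₁ := (mem_image_mul_iff p₁ q₁ e hq₁0).mp (hTS₁ (hZT heZ))
      have h₂ := (mem_image_mul_iff p₂ q₂ e hq₂0).mp (hTS₂ (hZT heZ))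
      rw [hcoeff, if_pos h₁, if_pos h₂]
      have hdl : (d : ℤ) ∣ (l₁ - l₂) :=
        dvd_trans (Int.natCast_dvd_natCast.mpr (Nat.gcd_dvd_right g _))
          (Int.natAbs_dvd.mpr dvd_rfl)
      obtain ⟨m, hm⟩ := hdl
      rw [hZdef, Finset.mem_image] at heZ
      obtain ⟨t, _, hte⟩ := heZ
      have he' : (e : ℤ) = (t : ℤ) * (((g / d : ℕ)) : ℤ) * (((n / g : ℕ)) : ℤ) := by
        rw [← hte]; push_cast; ring
      have e1 : (d : ℤ) * ((g / d : ℕ) : ℤ) = g := by exact_mod_cast hdg'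
      have e2 : (g : ℤ) * ((n / g : ℕ) : ℤ) = n := by exact_mod_cast hng
      have heq : α ^ (l₁ * e) = α ^ (l₂ * e) := by
        rw [zpow_eq_zpow_iff hn0 hα]
        refine ⟨m * t, ?_⟩
        linear_combination (e : ℤ) * hm + ((d : ℤ) * m) * he'
          + (m * t * ((n / g : ℕ) : ℤ)) * e1 + (m * t) * e2
      rw [heq, CharTwo.add_self_eq_zero]
    have hsupp : f.support ⊆ (S₁ ∪ S₂) \ Z := by
      intro e he
      rw [mem_support_iff] at he
      rw [Finset.mem_sdiff, Finset.mem_union]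
      constructor
      · by_contra hc
        push_neg at hc
        apply he
        rw [hcoeff, if_neg (fun hcond => hc.1 ((mem_image_mul_iff p₁ q₁ e hq₁0).mpr hcond)),
          if_neg (fun hcond => hc.2 ((mem_image_mul_iff p₂ q₂ e hq₂0).mpr hcond)), add_zero]
      · intro heZ
        exact he (hZzero e heZ)
    have hinj : ∀ q : ℕ, 0 < q → Function.Injective (· * q) := fun q hq a b hab =>
      Nat.eq_of_mul_eq_mul_right hq hab
    have hS₁card : S₁.card = p₁ := by
      rw [hS₁def, Finset.card_image_of_injective _ (hinj q₁ hq₁0), Finset.card_range]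
    have hS₂card : S₂.card = p₂ := by
      rw [hS₂def, Finset.card_image_of_injective _ (hinj q₂ hq₂0), Finset.card_range]
    have hTcard : T.card = g := by
      rw [hTdef, Finset.card_image_of_injective _ (hinj _ hng0), Finset.card_range]
    have hZcard : Z.card = d := by
      rw [hZdef, Finset.card_image_of_injective _ (hinj _ (Nat.mul_pos hgd0 hng0)),
        Finset.card_range]
    have h1 := Finset.card_union_add_card_inter S₁ S₂
    have h2 : g ≤ (S₁ ∩ S₂).card :=
      hTcard ▸ Finset.card_le_card (Finset.subset_inter hTS₁ hTS₂)
    have hZU : Z ⊆ S₁ ∪ S₂ := fun e he => Finset.mem_union_left _ (hTS₁ (hZT he))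
    have h3 : f.support.card ≤ ((S₁ ∪ S₂) \ Z).card := Finset.card_le_card hsupp
    have h4 : ((S₁ ∪ S₂) \ Z).card = (S₁ ∪ S₂).card - d := by
      rw [Finset.card_sdiff_of_subset hZU, hZcard]
    have h5 : d ≤ g := Nat.gcd_le_left _ hg0
    omega

end LRC
end

section
/- Let q be a power of 2, n | q−1, and α ∈ F_q a primitive n-th root of unity. Let D be a cyclic code of length n over F_q with complete defining set Z(D), let p_1, p_2, p_3 be positive divisors of n, and let l_1, l_2, l_3 be integers. If Z(D) contains every n-th root of unity that belongs to an odd number of the cosets α^{l_1}G_{p_1}, α^{l_2}G_{p_2}, α^{l_3}G_{p_3}, then the locality r of D satisfies r ≤ p_1 + p_2 + p_3 − 2·gcd(p_1,p_2,l_1−l_2) − 2·gcd(p_1,p_3,l_1−l_3) − 2·gcd(p_2,p_3,l_2−l_3) + 4·gcd(p_1,p_2,p_3,l_1−l_2,l_2−l_3) − 1. -/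
/-!
Put `h(ζ) = ∑ₖ [ζ^{pₖ} = 1] ζ^{lₖ}` (`cosetCheck`). In characteristic `2` the existence of a
primitive `n`-th root of unity forces `n` to be odd, so the factors `n / pₖ` of the geometric sums
are `1` and `h(α^u)` is the sum of `β^u` over the three cosets, counted with multiplicity. Hence for
a codeword `c` and a shift `a`, `∑ⱼ cⱼ h(α^{j+a}) = ∑_β N(β) β^a c(β)`, where `N(β)` is the number
of cosets containing `β`: the terms with `N(β)` even vanish in characteristic `2`, the others
because `β ∈ Z(D)`. So every shift of `(h(α^j))ⱼ` is a dual codeword, which gives locality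
`wt(h) - 1`. Finally, at a root of unity `ζ` two of the three terms of `h(ζ)` cancel exactly when
both are present and equal, and the roots where this happens are those of order dividing
`gcd(pᵢ, pⱼ, lᵢ - lⱼ)`; inclusion–exclusion then bounds the weight of `h`.
-/

open scoped BigOperators

namespace LRC

open scoped Classical

/-- The coset `α^l G_m` of the subgroup `G_m = {α^{jm}}` of the n-th roots of unity. -/
def coset {F : Type*} [Field F] (α : F) (n : ℕ) (l : ℤ) (m : ℕ) : Set F :=
  {β | ∃ j : ℕ, j < n / m ∧ β = α ^ (l + (j : ℤ) * m)}

open Finset Polynomial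

section RootsOfUnity

variable {F : Type*} [Field F]

lemma pow_natAbs_eq_one₀ {ζ : F} (d : ℤ) : ζ ^ d.natAbs = 1 ↔ ζ ^ d = 1 := by
  obtain ⟨k, rfl | rfl⟩ := Int.eq_nat_or_neg d <;> simp

lemma zpow_eq_zpow_iff_pow_natAbs_sub {ζ : F} (hζ : ζ ≠ 0) (l l' : ℤ) :
    ζ ^ l = ζ ^ l' ↔ ζ ^ (l - l').natAbs = 1 := by
  rw [pow_natAbs_eq_one₀, zpow_sub₀ hζ, div_eq_one_iff_eq (zpow_ne_zero _ hζ)]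

lemma zpow_add_natCast_mul {ζ : F} (hζ : ζ ≠ 0) (l : ℤ) (s p : ℕ) :
    ζ ^ (l + s * p) = ζ ^ l * (ζ ^ p) ^ s := by
  rw [zpow_add₀ hζ, ← pow_mul, mul_comm p s, ← zpow_natCast, Nat.cast_mul]

lemma geom_sum_eq_ite_of_pow_eq_one {x : F} {m : ℕ} (hx : x ^ m = 1) :
    ∑ s ∈ range m, x ^ s = if x = 1 then (m : F) else 0 := by
  split_ifs with h
  · simp [h]
  · have h' := geom_sum_mul x m
    rw [hx, sub_self] at h'
    exact (mul_eq_zero.1 h').resolve_right (sub_ne_zero.2 h)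

lemma charP_two_of_card_eq_two_pow [Fintype F] {e : ℕ} (he : 0 < e)
    (hcard : Fintype.card F = 2 ^ e) : CharP F 2 := by
  refine CharTwo.of_one_ne_zero_of_two_eq_zero one_ne_zero ?_
  have h := FiniteField.cast_card_eq_zero F
  rw [hcard, Nat.cast_pow, Nat.cast_ofNat] at h
  exact (pow_eq_zero_iff he.ne').1 h

variable {n : ℕ} {α : F}

noncomputable def cosetFinset (α : F) (n : ℕ) (l : ℤ) (p : ℕ) : Finset F :=
  (range (n / p)).image fun s : ℕ => α ^ (l + s * p)

lemma mem_cosetFinset {β : F} {l : ℤ} {p : ℕ} :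
    β ∈ cosetFinset α n l p ↔ β ∈ coset α n l p := by
  simp [cosetFinset, coset, eq_comm]

lemma pow_eq_one_of_mem_cosetFinset (hα : IsPrimitiveRoot α n) {β : F} {l : ℤ} {p : ℕ}
    (hβ : β ∈ cosetFinset α n l p) : β ^ n = 1 := by
  obtain ⟨s, -, rfl⟩ := mem_image.1 hβ
  rw [← zpow_natCast, ← zpow_mul, mul_comm, zpow_mul, zpow_natCast, hα.pow_eq_one, one_zpow]

variable [NeZero n]

lemma odd_of_isPrimitiveRoot [CharP F 2] (hα : IsPrimitiveRoot α n) : Odd n :=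
  Nat.not_even_iff_odd.1 fun he => hα.neZero'.out ((CharP.cast_eq_zero_iff F 2 n).2 he.two_dvd)

lemma card_filter_nthRootsFinset_pow_eq_one (hα : IsPrimitiveRoot α n) {g : ℕ} (hg : 0 < g)
    (hgn : g ∣ n) : #{ζ ∈ nthRootsFinset n (1 : F) | ζ ^ g = 1} = g := by
  have hroots : {ζ ∈ nthRootsFinset n (1 : F) | ζ ^ g = 1} = nthRootsFinset g (1 : F) := by
    ext ζ
    simp only [mem_filter, mem_nthRootsFinset (NeZero.pos n), mem_nthRootsFinset hg]
    refine ⟨And.right, fun h => ⟨?_, h⟩⟩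
    obtain ⟨k, rfl⟩ := hgn
    rw [pow_mul, h, one_pow]
  have hprim : IsPrimitiveRoot (α ^ (n / g)) g := by
    simpa [Nat.div_div_self hgn (NeZero.ne n)] using
      hα.pow_of_dvd (Nat.div_pos (Nat.le_of_dvd (NeZero.pos n) hgn) hg).ne' (Nat.div_dvd_of_dvd hgn)
  rw [hroots, hprim.card_nthRootsFinset]

lemma injOn_cosetFinset (hα : IsPrimitiveRoot α n) (l : ℤ) {p : ℕ} (hp : 0 < p) (hpn : p ∣ n) :
    Set.InjOn (fun s : ℕ => α ^ (l + s * p)) (range (n / p)) := by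
  intro s hs s' hs' h
  have hα0 : α ≠ 0 := hα.ne_zero (NeZero.ne n)
  simp only [zpow_add_natCast_mul hα0, mul_right_inj' (zpow_ne_zero l hα0)] at h
  exact (hα.pow_of_dvd hp.ne' hpn).pow_inj (mem_range.1 hs) (mem_range.1 hs') h

lemma sum_cosetFinset_pow (hα : IsPrimitiveRoot α n) (l : ℤ) {p : ℕ} (hp : 0 < p) (hpn : p ∣ n)
    (u : ℕ) : ∑ β ∈ cosetFinset α n l p, β ^ u =
      if (α ^ u) ^ p = 1 then ((n / p : ℕ) : F) * (α ^ u) ^ l else 0 := by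
  have hαu : α ^ u ≠ 0 := pow_ne_zero u (hα.ne_zero (NeZero.ne n))
  have hroot : ((α ^ u) ^ p) ^ (n / p) = 1 := by
    rw [← pow_mul, Nat.mul_div_cancel' hpn, ← pow_mul, mul_comm, pow_mul, hα.pow_eq_one, one_pow]
  have hchar (s : ℕ) : (α ^ (l + s * p)) ^ u = (α ^ u) ^ l * ((α ^ u) ^ p) ^ s := by
    rw [← zpow_natCast, ← zpow_mul, mul_comm, zpow_mul, zpow_natCast, zpow_add_natCast_mul hαu]
  rw [cosetFinset, sum_image (injOn_cosetFinset hα l hp hpn)]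
  simp only [hchar, ← mul_sum, geom_sum_eq_ite_of_pow_eq_one hroot]
  split_ifs <;> ring

lemma sum_ite_mem_coset_eq_sum_cosetFinset (hα : IsPrimitiveRoot α n) (l : ℤ) (p : ℕ)
    (f : F → F) : ∑ β ∈ nthRootsFinset n (1 : F), (if β ∈ coset α n l p then f β else 0) =
      ∑ β ∈ cosetFinset α n l p, f β := by
  rw [← sum_filter]
  congr 1
  ext β
  rw [mem_filter, mem_cosetFinset, mem_nthRootsFinset (NeZero.pos n)]
  exact ⟨And.right, fun h => ⟨pow_eq_one_of_mem_cosetFinset hα (mem_cosetFinset.2 h), h⟩⟩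

end RootsOfUnity

section CosetCheck

variable {F : Type*} [Field F] {ι : Type*} [Fintype ι]

noncomputable def cosetCheck (p : ι → ℕ) (l : ι → ℤ) (ζ : F) : F :=
  ∑ k, if ζ ^ p k = 1 then ζ ^ l k else 0

variable [CharP F 2] {n : ℕ} [NeZero n] {α : F}

theorem cosetCheck_mem_dualCode (hα : IsPrimitiveRoot α n) {p : ι → ℕ}
    (hp : ∀ k, 0 < p k) (hpn : ∀ k, p k ∣ n) (l : ι → ℤ) {D : Submodule F (Fin n → F)}
    (hZ : ∀ γ : F, γ ^ n = 1 →
      Odd (∑ k, if γ ∈ coset α n (l k) (p k) then 1 else 0) → γ ∈ definingSet D) (a : ℕ) :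
    (fun j : Fin n => cosetCheck p l (α ^ ((j : ℕ) + a))) ∈ dualCode D := by
  intro c hc
  set count : F → ℕ := fun β => ∑ k, if β ∈ coset α n (l k) (p k) then 1 else 0
  set ĉ : F → F := fun β => ∑ j : Fin n, c j * β ^ (j : ℕ)
  have hcoset (k : ι) (u : ℕ) : (if (α ^ u) ^ p k = 1 then (α ^ u) ^ l k else 0) =
      ∑ β ∈ cosetFinset α n (l k) (p k), β ^ u := by
    rw [sum_cosetFinset_pow hα (l k) (hp k) (hpn k), natCast_eq_one_of_odd_of_two_eq_zero
      ((odd_of_isPrimitiveRoot hα).of_dvd_nat (Nat.div_dvd_of_dvd (hpn k)))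
      CharTwo.two_eq_zero, one_mul]
  have hterm : ∀ β ∈ nthRootsFinset n (1 : F), (count β : F) * (β ^ a * ĉ β) = 0 := by
    intro β hβ
    rcases Nat.even_or_odd (count β) with heven | hodd
    · rw [natCast_eq_zero_of_even_of_two_eq_zero heven CharTwo.two_eq_zero, zero_mul]
    · have hzero := (hZ β ((mem_nthRootsFinset (NeZero.pos n) 1).1 hβ) hodd).2 c hc
      simp only [ĉ, hzero, mul_zero]
  calc ∑ j : Fin n, c j * cosetCheck p l (α ^ ((j : ℕ) + a))
      = ∑ k, ∑ β ∈ cosetFinset α n (l k) (p k), β ^ a * ĉ β := by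
        simp only [cosetCheck, hcoset]
        simp only [mul_sum, ĉ, pow_add]
        rw [sum_comm]
        refine sum_congr rfl fun k _ => ?_
        rw [sum_comm]
        exact sum_congr rfl fun β _ => sum_congr rfl fun j _ => by ring
    _ = ∑ β ∈ nthRootsFinset n (1 : F), (count β : F) * (β ^ a * ĉ β) := by
        simp only [← sum_ite_mem_coset_eq_sum_cosetFinset hα, count]
        rw [sum_comm]
        push_cast
        simp only [sum_mul, ite_mul, one_mul, zero_mul]
    _ = 0 := sum_eq_zero hterm

end CosetCheck

section WeightBound

lemma indicator_sum_three_ne_zero_le {R : Type*} [Ring R] [CharP R 2] (b₁ b₂ b₃ : Prop)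
    [Decidable b₁] [Decidable b₂] [Decidable b₃] (x₁ x₂ x₃ : R) :
    (if (if b₁ then x₁ else 0) + (if b₂ then x₂ else 0) + (if b₃ then x₃ else 0) ≠ 0
      then 1 else 0 : ℤ) ≤
      (if b₁ then 1 else 0) + (if b₂ then 1 else 0) + (if b₃ then 1 else 0)
        - 2 * (if b₁ ∧ b₂ ∧ x₁ = x₂ then 1 else 0) - 2 * (if b₁ ∧ b₃ ∧ x₁ = x₃ then 1 else 0)
        - 2 * (if b₂ ∧ b₃ ∧ x₂ = x₃ then 1 else 0)
        + 4 * (if b₁ ∧ b₂ ∧ b₃ ∧ x₁ = x₂ ∧ x₂ = x₃ then 1 else 0) := by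
  by_cases h₁ : b₁ <;> by_cases h₂ : b₂ <;> by_cases h₃ : b₃ <;>
    by_cases e₁₂ : x₁ = x₂ <;> by_cases e₂₃ : x₂ = x₃ <;> by_cases e₁₃ : x₁ = x₃ <;>
    simp_all [CharTwo.add_self_eq_zero] <;> split_ifs <;> omega

variable {F : Type*} [Field F] {n : ℕ} [NeZero n] {α : F}

lemma card_filter_nthRootsFinset_eq_gcd (hα : IsPrimitiveRoot α n) {p p' : ℕ} (hp : 0 < p)
    (hpn : p ∣ n) (l l' : ℤ) :
    #{ζ ∈ nthRootsFinset n (1 : F) | ζ ^ p = 1 ∧ ζ ^ p' = 1 ∧ ζ ^ l = ζ ^ l'} =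
      Nat.gcd (Nat.gcd p p') (l - l').natAbs := by
  have hgn : Nat.gcd (Nat.gcd p p') (l - l').natAbs ∣ n :=
    (Nat.gcd_dvd_left _ _).trans ((Nat.gcd_dvd_left _ _).trans hpn)
  rw [← card_filter_nthRootsFinset_pow_eq_one hα (by positivity) hgn]
  refine congrArg card (filter_congr fun ζ hζ => ?_)
  have hζ0 : ζ ≠ 0 := ne_zero_of_mem_nthRootsFinset one_ne_zero hζ
  rw [zpow_eq_zpow_iff_pow_natAbs_sub hζ0, pow_gcd_eq_one, pow_gcd_eq_one, and_assoc]

lemma card_filter_nthRootsFinset_eq_gcd_three (hα : IsPrimitiveRoot α n) {p₁ p₂ p₃ : ℕ}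
    (hp₁ : 0 < p₁) (hp₁n : p₁ ∣ n) (l₁ l₂ l₃ : ℤ) :
    #{ζ ∈ nthRootsFinset n (1 : F) |
        ζ ^ p₁ = 1 ∧ ζ ^ p₂ = 1 ∧ ζ ^ p₃ = 1 ∧ ζ ^ l₁ = ζ ^ l₂ ∧ ζ ^ l₂ = ζ ^ l₃} =
      Nat.gcd (Nat.gcd (Nat.gcd (Nat.gcd p₁ p₂) p₃) (l₁ - l₂).natAbs) (l₂ - l₃).natAbs := by
  have hgn : Nat.gcd (Nat.gcd (Nat.gcd (Nat.gcd p₁ p₂) p₃) (l₁ - l₂).natAbs) (l₂ - l₃).natAbs ∣ n :=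
    (Nat.gcd_dvd_left _ _).trans <| (Nat.gcd_dvd_left _ _).trans <|
      (Nat.gcd_dvd_left _ _).trans <| (Nat.gcd_dvd_left _ _).trans hp₁n
  rw [← card_filter_nthRootsFinset_pow_eq_one hα (by positivity) hgn]
  refine congrArg card (filter_congr fun ζ hζ => ?_)
  have hζ0 : ζ ≠ 0 := ne_zero_of_mem_nthRootsFinset one_ne_zero hζ
  simp only [zpow_eq_zpow_iff_pow_natAbs_sub hζ0, pow_gcd_eq_one, and_assoc]

theorem card_cosetCheck_ne_zero_le [CharP F 2] (hα : IsPrimitiveRoot α n) {p₁ p₂ p₃ : ℕ}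
    (hp₁ : 0 < p₁) (hp₂ : 0 < p₂) (hp₃ : 0 < p₃) (hp₁n : p₁ ∣ n) (hp₂n : p₂ ∣ n) (hp₃n : p₃ ∣ n)
    (l₁ l₂ l₃ : ℤ) :
    (#{ζ ∈ nthRootsFinset n (1 : F) | cosetCheck ![p₁, p₂, p₃] ![l₁, l₂, l₃] ζ ≠ 0} : ℤ) ≤
      (p₁ : ℤ) + p₂ + p₃
        - 2 * Nat.gcd (Nat.gcd p₁ p₂) (l₁ - l₂).natAbs
        - 2 * Nat.gcd (Nat.gcd p₁ p₃) (l₁ - l₃).natAbs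
        - 2 * Nat.gcd (Nat.gcd p₂ p₃) (l₂ - l₃).natAbs
        + 4 * Nat.gcd (Nat.gcd (Nat.gcd (Nat.gcd p₁ p₂) p₃) (l₁ - l₂).natAbs) (l₂ - l₃).natAbs := by
  calc (#{ζ ∈ nthRootsFinset n (1 : F) | cosetCheck ![p₁, p₂, p₃] ![l₁, l₂, l₃] ζ ≠ 0} : ℤ)
      = ∑ ζ ∈ nthRootsFinset n (1 : F),
          if cosetCheck ![p₁, p₂, p₃] ![l₁, l₂, l₃] ζ ≠ 0 then 1 else 0 := by rw [sum_boole]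
    _ ≤ ∑ ζ ∈ nthRootsFinset n (1 : F), ((if ζ ^ p₁ = 1 then 1 else 0)
          + (if ζ ^ p₂ = 1 then 1 else 0) + (if ζ ^ p₃ = 1 then 1 else 0)
          - 2 * (if ζ ^ p₁ = 1 ∧ ζ ^ p₂ = 1 ∧ ζ ^ l₁ = ζ ^ l₂ then 1 else 0)
          - 2 * (if ζ ^ p₁ = 1 ∧ ζ ^ p₃ = 1 ∧ ζ ^ l₁ = ζ ^ l₃ then 1 else 0)
          - 2 * (if ζ ^ p₂ = 1 ∧ ζ ^ p₃ = 1 ∧ ζ ^ l₂ = ζ ^ l₃ then 1 else 0)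
          + 4 * (if ζ ^ p₁ = 1 ∧ ζ ^ p₂ = 1 ∧ ζ ^ p₃ = 1 ∧ ζ ^ l₁ = ζ ^ l₂ ∧ ζ ^ l₂ = ζ ^ l₃
            then 1 else 0) : ℤ) := sum_le_sum fun ζ _ => by
        simp only [cosetCheck, Fin.sum_univ_three, Matrix.cons_val]
        exact indicator_sum_three_ne_zero_le (ζ ^ p₁ = 1) (ζ ^ p₂ = 1) (ζ ^ p₃ = 1)
          (ζ ^ l₁) (ζ ^ l₂) (ζ ^ l₃)
    _ = _ := by
      simp only [sum_add_distrib, sum_sub_distrib, ← mul_sum, sum_boole,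
        card_filter_nthRootsFinset_pow_eq_one hα hp₁ hp₁n,
        card_filter_nthRootsFinset_pow_eq_one hα hp₂ hp₂n,
        card_filter_nthRootsFinset_pow_eq_one hα hp₃ hp₃n,
        card_filter_nthRootsFinset_eq_gcd hα hp₁ hp₁n,
        card_filter_nthRootsFinset_eq_gcd hα hp₂ hp₂n,
        card_filter_nthRootsFinset_eq_gcd_three hα hp₁ hp₁n]

end WeightBound

section Locality

variable {F : Type*} [Field F] {n : ℕ}

lemma hwt_eq_card_filter (y : Fin n → F) : hwt y = #{j | y j ≠ 0} := by
  rw [hwt, Nat.card_eq_fintype_card, Fintype.card_subtype]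

theorem hasLocality_of_dualCode {C : Submodule F (Fin n → F)} {r : ℕ}
    (h : ∀ i, ∃ y ∈ dualCode C, y i ≠ 0 ∧ hwt y ≤ r + 1) : HasLocality C r := by
  intro i
  obtain ⟨y, hy, hyi, hwy⟩ := h i
  set S : Finset (Fin n) := {j | y j ≠ 0}
  have hi : i ∈ S := mem_filter.2 ⟨mem_univ i, hyi⟩
  refine ⟨S.erase i, ?_, notMem_erase i S, fun w => -(y i)⁻¹ * ∑ j : S.erase i, w j * y j, ?_⟩
  · rw [card_erase_of_mem hi, ← hwt_eq_card_filter]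
    omega
  · intro c hc
    have hsplit : c i * y i + ∑ j ∈ S.erase i, c j * y j = 0 := by
      rw [add_sum_erase S (fun j => c j * y j) hi,
        sum_filter_of_ne fun j _ hj => right_ne_zero_of_mul hj]
      exact hy c hc
    show c i = -(y i)⁻¹ * ∑ j : S.erase i, c j * y j
    rw [sum_coe_sort (S.erase i) fun j => c j * y j]
    field_simp
    linear_combination hsplit

variable [NeZero n] {α : F}

lemma hwt_comp_pow_add (hα : IsPrimitiveRoot α n) (f : F → F) (a : ℕ) :
    hwt (fun j : Fin n => f (α ^ ((j : ℕ) + a))) = #{ζ ∈ nthRootsFinset n (1 : F) | f ζ ≠ 0} := by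
  have hαa : α ^ a ≠ 0 := pow_ne_zero a (hα.ne_zero (NeZero.ne n))
  rw [hwt_eq_card_filter]
  refine card_nbij (fun j => α ^ ((j : ℕ) + a)) (fun j hj => ?_) (fun j _ j' _ h => ?_)
    (fun ζ hζ => ?_)
  · refine mem_filter.2 ⟨(mem_nthRootsFinset (NeZero.pos n) 1).2 ?_, (mem_filter.1 hj).2⟩
    rw [pow_right_comm, hα.pow_eq_one, one_pow]
  · simp only [pow_add, mul_left_inj' hαa] at h
    exact Fin.ext (hα.pow_inj j.2 j'.2 h)
  · obtain ⟨hζn, hfζ⟩ := mem_filter.1 hζ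
    rw [mem_nthRootsFinset (NeZero.pos n)] at hζn
    obtain ⟨t, ht, hαt⟩ := hα.eq_pow_of_pow_eq_one (ξ := ζ * (α ^ a)⁻¹)
      (by rw [mul_pow, inv_pow, hζn, pow_right_comm, hα.pow_eq_one, one_pow, inv_one, mul_one])
    refine ⟨⟨t, ht⟩, mem_filter.2 ⟨mem_univ _, ?_⟩, ?_⟩ <;>
      simp only [pow_add, hαt, inv_mul_cancel_right₀ hαa]
    exact hfζ

end Locality

theorem stmt12_general {F : Type*} [Field F] [Fintype F] (q n : ℕ) [NeZero n]
    (hq : Fintype.card F = q) (hq2 : ∃ e : ℕ, 0 < e ∧ q = 2 ^ e)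
    (α : F) (hα : IsPrimitiveRoot α n)
    (p₁ p₂ p₃ : ℕ) (hp₁ : 0 < p₁) (hp₂ : 0 < p₂) (hp₃ : 0 < p₃)
    (hp₁n : p₁ ∣ n) (hp₂n : p₂ ∣ n) (hp₃n : p₃ ∣ n)
    (l₁ l₂ l₃ : ℤ)
    (D : Submodule F (Fin n → F))
    (hZ : ∀ γ : F, γ ^ n = 1 →
      Odd ((if γ ∈ coset α n l₁ p₁ then 1 else 0) + (if γ ∈ coset α n l₂ p₂ then 1 else 0)
          + (if γ ∈ coset α n l₃ p₃ then 1 else 0) : ℕ) →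
      γ ∈ definingSet D) :
    ∃ r : ℕ, HasLocality D r ∧
      (r : ℤ) ≤ (p₁ : ℤ) + p₂ + p₃
          - 2 * Nat.gcd (Nat.gcd p₁ p₂) (l₁ - l₂).natAbs
          - 2 * Nat.gcd (Nat.gcd p₁ p₃) (l₁ - l₃).natAbs
          - 2 * Nat.gcd (Nat.gcd p₂ p₃) (l₂ - l₃).natAbs
          + 4 * Nat.gcd (Nat.gcd (Nat.gcd (Nat.gcd p₁ p₂) p₃) (l₁ - l₂).natAbs)
              (l₂ - l₃).natAbs
          - 1 := by
  obtain ⟨e, he, rfl⟩ := hq2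
  have := charP_two_of_card_eq_two_pow he hq
  set h : F → F := cosetCheck ![p₁, p₂, p₃] ![l₁, l₂, l₃]
  have hdual (a : ℕ) : (fun j : Fin n => h (α ^ ((j : ℕ) + a))) ∈ dualCode D :=
    cosetCheck_mem_dualCode hα (by simp [Fin.forall_fin_succ, *]) (by simp [Fin.forall_fin_succ, *])
      _ (fun γ hγ hodd => hZ γ hγ (by rwa [Fin.sum_univ_three] at hodd)) a
  have h_one : h 1 = 1 := by
    simp only [h, cosetCheck, Fin.sum_univ_three, one_pow, one_zpow, if_true]
    rw [CharTwo.add_self_eq_zero, zero_add]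
  set N := #{ζ ∈ nthRootsFinset n (1 : F) | h ζ ≠ 0}
  have hN : 1 ≤ N := card_pos.2 ⟨1, mem_filter.2
    ⟨(mem_nthRootsFinset (NeZero.pos n) 1).2 (one_pow n), by simp [h_one]⟩⟩
  refine ⟨N - 1, hasLocality_of_dualCode fun i => ⟨_, hdual (n - i), ?_, ?_⟩, ?_⟩
  · simp [Nat.add_sub_cancel' i.is_lt.le, hα.pow_eq_one, h_one]
  · rw [hwt_comp_pow_add hα]
    omega
  · have hbound := card_cosetCheck_ne_zero_le hα hp₁ hp₂ hp₃ hp₁n hp₂n hp₃n l₁ l₂ l₃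
    push_cast [hN]
    linarith

/-- a bound on the locality of a cyclic code whose defining set contains every
n-th root of unity lying in an odd number of three given cosets. -/
theorem stmt12 {F : Type*} [Field F] [Fintype F] (q n : ℕ) [NeZero n]
    (hq : Fintype.card F = q) (hq2 : ∃ e : ℕ, 0 < e ∧ q = 2 ^ e) (hn : n ∣ q - 1)
    (α : F) (hα : IsPrimitiveRoot α n)
    (p₁ p₂ p₃ : ℕ) (hp₁ : 0 < p₁) (hp₂ : 0 < p₂) (hp₃ : 0 < p₃)
    (hp₁n : p₁ ∣ n) (hp₂n : p₂ ∣ n) (hp₃n : p₃ ∣ n)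
    (l₁ l₂ l₃ : ℤ)
    (D : Submodule F (Fin n → F)) (hcyc : IsCyclicCode D)
    (hZ : ∀ γ : F, γ ^ n = 1 →
      Odd ((if γ ∈ coset α n l₁ p₁ then 1 else 0) + (if γ ∈ coset α n l₂ p₂ then 1 else 0)
          + (if γ ∈ coset α n l₃ p₃ then 1 else 0) : ℕ) →
      γ ∈ definingSet D) :
    ∃ r : ℕ, HasLocality D r ∧
      (r : ℤ) ≤ (p₁ : ℤ) + p₂ + p₃
          - 2 * Nat.gcd (Nat.gcd p₁ p₂) (l₁ - l₂).natAbs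
          - 2 * Nat.gcd (Nat.gcd p₁ p₃) (l₁ - l₃).natAbs
          - 2 * Nat.gcd (Nat.gcd p₂ p₃) (l₂ - l₃).natAbs
          + 4 * Nat.gcd (Nat.gcd (Nat.gcd (Nat.gcd p₁ p₂) p₃) (l₁ - l₂).natAbs)
              (l₂ - l₃).natAbs
          - 1 :=
  stmt12_general q n hq hq2 α hα p₁ p₂ p₃ hp₁ hp₂ hp₃ hp₁n hp₂n hp₃n l₁ l₂ l₃ D hZ

end LRC
end
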